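/- arXiv:2203.15150 — 6 statements merged into one kernel-verified Lean document; each statement's English description precedes it below -/
import Mathlib

section
/- Let Δ > 0 and m ∈ ℕ. Define u_i = g_{iΔ} ∈ L²(ℝ) for 0 ≤ i ≤ m and the Gram–Schmidt elements ũ₀ = u₀ and ũ_i = u_i − Σ_{j=0}^{i−1} (⟨u_i, ũ_j⟩/⟨ũ_j, ũ_j⟩) ũ_j for i ≥ 1. Then all ũ_i are nonzero (so the recursion is well defined), and for every a ∈ ℝ and every 0 ≤ i ≤ m: ⟨g_a, ũ_i⟩ = (4π)^{−1/2} e^{−a²/4} e^{−iΔ²/4} ∏_{k=1}^{i} (e^{aΔ/2 − (k−1)Δ²/2} − 1). In particular (taking a = iΔ), ‖ũ_i‖₂² = (4π)^{−1/2} ∏_{k=1}^{i} (1 − e^{−kΔ²/2}). -/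
open MeasureTheory Real

/-- The unit-variance Gaussian density centered at `μ`. -/
noncomputable def gauss (μ x : ℝ) : ℝ := (Real.sqrt (2 * Real.pi))⁻¹ * Real.exp (-(x - μ)^2 / 2)

/-- The `L²` inner product of two functions. -/
noncomputable def ip (p q : ℝ → ℝ) : ℝ := ∫ x, p x * q x

lemma gauss_mul_eq (a b : ℝ) : (fun x => gauss a x * gauss b x)
    = fun x => ((Real.sqrt (2*Real.pi))⁻¹ * (Real.sqrt (2*Real.pi))⁻¹ * Real.exp (-(a-b)^2/4))
        * Real.exp (-(1:ℝ) * (x - (a+b)/2)^2) := by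
  funext x
  simp only [gauss]
  rw [show (Real.sqrt (2*Real.pi))⁻¹ * Real.exp (-(x - a)^2 / 2) * ((Real.sqrt (2*Real.pi))⁻¹ * Real.exp (-(x - b)^2 / 2))
    = (Real.sqrt (2*Real.pi))⁻¹ * (Real.sqrt (2*Real.pi))⁻¹ * (Real.exp (-(x - a)^2 / 2) * Real.exp (-(x - b)^2 / 2)) by ring,
    ← Real.exp_add, show -(x - a)^2 / 2 + -(x - b)^2 / 2 = -(a-b)^2/4 + -(1:ℝ) * (x - (a+b)/2)^2 by ring,
    Real.exp_add]
  ring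

lemma integrable_gauss_mul (a b : ℝ) : Integrable (fun x => gauss a x * gauss b x) := by
  rw [gauss_mul_eq]
  exact ((integrable_exp_neg_mul_sq one_pos).comp_sub_right ((a+b)/2)).const_mul _

lemma ip_gauss (a b : ℝ) : ip (gauss a) (gauss b)
    = (Real.sqrt (4 * Real.pi))⁻¹ * Real.exp (-(a-b)^2/4) := by
  have h : ip (gauss a) (gauss b) = ∫ x, gauss a x * gauss b x := rfl
  rw [h, gauss_mul_eq, integral_const_mul]
  have h2 : (∫ x : ℝ, Real.exp (-(1:ℝ) * (x - (a+b)/2)^2)) = ∫ x : ℝ, Real.exp (-(1:ℝ) * x^2) :=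
    integral_sub_right_eq_self (fun x => Real.exp (-(1:ℝ) * x^2)) ((a+b)/2)
  rw [h2, integral_gaussian]
  have hπ : (0:ℝ) ≤ Real.pi := Real.pi_pos.le
  rw [show (4:ℝ) * Real.pi = (2*Real.sqrt Real.pi)^2 by
        rw [mul_pow, sq_sqrt hπ]; ring]
  rw [Real.sqrt_sq (by positivity), show Real.pi / 1 = Real.pi by ring]
  have h3 : (Real.sqrt (2*Real.pi))⁻¹ * (Real.sqrt (2*Real.pi))⁻¹ = (2*Real.pi)⁻¹ := by
    rw [← mul_inv, Real.mul_self_sqrt (by positivity)]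
  rw [h3]
  have hs : Real.sqrt Real.pi ^ 2 = Real.pi := sq_sqrt hπ
  have hsp : 0 < Real.sqrt Real.pi := Real.sqrt_pos.2 Real.pi_pos
  field_simp
  nlinarith [hs, Real.exp_pos (-(a - b) ^ 2 / 4)]

lemma ip_comm (p q : ℝ → ℝ) : ip p q = ip q p := by
  simp only [ip, mul_comm]

lemma integrable_gauss_combo (a : ℝ) (t : Finset ℕ) (d : ℕ → ℝ) (ν : ℕ → ℝ) :
    Integrable (fun x => gauss a x * (∑ k ∈ t, d k * gauss (ν k) x)) := by
  have h : (fun x => gauss a x * (∑ k ∈ t, d k * gauss (ν k) x))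
      = fun x => ∑ k ∈ t, d k * (gauss a x * gauss (ν k) x) := by
    funext x; rw [Finset.mul_sum]; exact Finset.sum_congr rfl fun k _ => by ring
  rw [h]
  exact integrable_finset_sum _ fun k _ => (integrable_gauss_mul a (ν k)).const_mul _

lemma ip_gauss_combo (a : ℝ) (t : Finset ℕ) (d : ℕ → ℝ) (ν : ℕ → ℝ) :
    ip (gauss a) (fun x => ∑ k ∈ t, d k * gauss (ν k) x)
      = ∑ k ∈ t, d k * ((Real.sqrt (4 * Real.pi))⁻¹ * Real.exp (-(a - ν k)^2/4)) := by
  have h1 : ip (gauss a) (fun x => ∑ k ∈ t, d k * gauss (ν k) x)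
      = ∫ x, ∑ k ∈ t, d k * (gauss a x * gauss (ν k) x) := by
    unfold ip
    congr 1; funext x; rw [Finset.mul_sum]; exact Finset.sum_congr rfl fun k _ => by ring
  rw [h1, integral_finset_sum _ fun k _ => (integrable_gauss_mul a (ν k)).const_mul _]
  exact Finset.sum_congr rfl fun k _ => by
    rw [integral_const_mul]
    have h2 : (∫ x, gauss a x * gauss (ν k) x) = ip (gauss a) (gauss (ν k)) := rfl
    rw [h2, ip_gauss]

lemma integrable_combo_combo (s t : Finset ℕ) (c d : ℕ → ℝ) (μ ν : ℕ → ℝ) :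
    Integrable (fun x => (∑ j ∈ s, c j * gauss (μ j) x) * (∑ k ∈ t, d k * gauss (ν k) x)) := by
  have h : (fun x => (∑ j ∈ s, c j * gauss (μ j) x) * (∑ k ∈ t, d k * gauss (ν k) x))
      = fun x => ∑ j ∈ s, c j * (gauss (μ j) x * (∑ k ∈ t, d k * gauss (ν k) x)) := by
    funext x; rw [Finset.sum_mul]; exact Finset.sum_congr rfl fun j _ => by ring
  rw [h]
  exact integrable_finset_sum _ fun j _ => (integrable_gauss_combo (μ j) t d ν).const_mul _

lemma ip_split_sub (f g : ℝ → ℝ) (s : Finset ℕ) (r : ℕ → ℝ) (u : ℕ → ℝ → ℝ)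
    (hfg : Integrable (fun x => f x * g x))
    (hug : ∀ j ∈ s, Integrable (fun x => u j x * g x)) :
    ip (fun x => f x - ∑ j ∈ s, r j * u j x) g = ip f g - ∑ j ∈ s, r j * ip (u j) g := by
  unfold ip
  have h : (fun x => (f x - ∑ j ∈ s, r j * u j x) * g x)
      = fun x => f x * g x - ∑ j ∈ s, r j * (u j x * g x) := by
    funext x; rw [sub_mul, Finset.sum_mul]
    congr 1
    exact Finset.sum_congr rfl fun j _ => by ring
  rw [h, integral_sub hfg (integrable_finset_sum _ fun j hj => ((hug j hj).const_mul _)),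
    integral_finset_sum _ fun j hj => ((hug j hj).const_mul _)]
  congr 1
  exact Finset.sum_congr rfl fun j _ => integral_const_mul _ _

lemma ip_split_add (f g : ℝ → ℝ) (s : Finset ℕ) (r : ℕ → ℝ) (u : ℕ → ℝ → ℝ)
    (hfg : Integrable (fun x => f x * g x))
    (hug : ∀ j ∈ s, Integrable (fun x => u j x * g x)) :
    ip (fun x => f x + ∑ j ∈ s, r j * u j x) g = ip f g + ∑ j ∈ s, r j * ip (u j) g := by
  unfold ip
  have h : (fun x => (f x + ∑ j ∈ s, r j * u j x) * g x)
      = fun x => f x * g x + ∑ j ∈ s, r j * (u j x * g x) := by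
    funext x; rw [add_mul, Finset.sum_mul]
    congr 1
    exact Finset.sum_congr rfl fun j _ => by ring
  rw [h, integral_add hfg (integrable_finset_sum _ fun j hj => ((hug j hj).const_mul _)),
    integral_finset_sum _ fun j hj => ((hug j hj).const_mul _)]
  congr 1
  exact Finset.sum_congr rfl fun j _ => integral_const_mul _ _

open Polynomial in
lemma poly_step (Δ : ℝ) (hΔ : 0 < Δ) (i : ℕ) (c : ℕ → ℝ) (hc1 : c i = 1)
    (hroot : ∀ t, t < i →
      (∑ k ∈ Finset.range (i+1), (c k * Real.exp (-(k:ℝ)^2*Δ^2/4)) * Real.exp ((t:ℝ)*Δ^2/2)^k) = 0) :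
    ∀ z : ℝ, (∑ k ∈ Finset.range (i+1), (c k * Real.exp (-(k:ℝ)^2*Δ^2/4)) * z^k)
      = Real.exp (-(i:ℝ)^2*Δ^2/4) * ∏ t ∈ Finset.range i, (z - Real.exp ((t:ℝ)*Δ^2/2)) := by
  set Q : ℝ[X] := ∑ k ∈ Finset.range (i+1), C (c k * Real.exp (-(k:ℝ)^2*Δ^2/4)) * X^k with hQ
  set M : ℝ[X] := ∏ t ∈ Finset.range i, (X - C (Real.exp ((t:ℝ)*Δ^2/2))) with hM
  set P : ℝ[X] := C (Real.exp (-(i:ℝ)^2*Δ^2/4)) * M with hP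
  have hQeval : ∀ z : ℝ, Q.eval z
      = ∑ k ∈ Finset.range (i+1), (c k * Real.exp (-(k:ℝ)^2*Δ^2/4)) * z^k := by
    intro z; rw [hQ]; simp [eval_finset_sum]
  have hPeval : ∀ z : ℝ, P.eval z
      = Real.exp (-(i:ℝ)^2*Δ^2/4) * ∏ t ∈ Finset.range i, (z - Real.exp ((t:ℝ)*Δ^2/2)) := by
    intro z; rw [hP, hM]; simp [eval_prod]
  have hMmonic : M.Monic := monic_prod_of_monic _ _ fun t _ => monic_X_sub_C _
  have hMdeg : M.natDegree = i := by
    rw [hM, natDegree_prod_of_monic _ _ fun t _ => monic_X_sub_C _]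
    simp
  have hQdeg : Q.natDegree ≤ i := by
    rw [hQ]
    refine natDegree_sum_le_of_forall_le _ _ fun k hk => ?_
    refine le_trans (natDegree_C_mul_le _ _) ?_
    rw [natDegree_X_pow]
    exact Nat.lt_succ_iff.1 (Finset.mem_range.1 hk)
  have hPdeg : P.natDegree ≤ i := by
    rw [hP]
    exact le_trans (natDegree_C_mul_le _ _) (le_of_eq hMdeg)
  have hQcoeff : Q.coeff i = Real.exp (-(i:ℝ)^2*Δ^2/4) := by
    rw [hQ, finset_sum_coeff]
    rw [Finset.sum_eq_single i]
    · rw [coeff_C_mul, coeff_X_pow, if_pos rfl, mul_one, hc1, one_mul]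
    · intro k _ hk
      rw [coeff_C_mul, coeff_X_pow, if_neg (fun h => hk h.symm), mul_zero]
    · intro h
      exact absurd (Finset.mem_range.2 (by omega)) h
  have hPcoeff : P.coeff i = Real.exp (-(i:ℝ)^2*Δ^2/4) := by
    rw [hP, coeff_C_mul, ← hMdeg, hMmonic.coeff_natDegree, mul_one]
  have hQP : Q = P := by
    by_cases hR : Q - P = 0
    · exact sub_eq_zero.mp hR
    exfalso
    apply hR
    have hinj : Function.Injective (fun t : Fin i => Real.exp ((t:ℝ)*Δ^2/2)) := by
      intro t1 t2 h
      simp only [Real.exp_eq_exp] at h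
      have h2 : ((t1:ℕ):ℝ) = ((t2:ℕ):ℝ) := by
        have hΔ2 : (0:ℝ) < Δ^2/2 := by positivity
        nlinarith [h]
      exact Fin.ext (Nat.cast_injective h2)
    apply Polynomial.eq_zero_of_natDegree_lt_card_of_eval_eq_zero (Q - P) hinj
    · intro t
      rw [eval_sub]
      have h1 : Q.eval (Real.exp ((t:ℝ)*Δ^2/2)) = 0 := by
        rw [hQeval]
        exact hroot t t.2
      have h2 : P.eval (Real.exp ((t:ℝ)*Δ^2/2)) = 0 := by
        rw [hPeval]
        apply mul_eq_zero_of_right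
        exact Finset.prod_eq_zero (Finset.mem_range.2 t.2) (sub_self _)
      rw [h1, h2, sub_zero]
    · rw [Fintype.card_fin]
      have hRdeg : (Q - P).natDegree ≤ i := le_trans (natDegree_sub_le _ _) (max_le hQdeg hPdeg)
      have hne : (Q - P).natDegree ≠ i := by
        intro h
        apply hR
        rw [← leadingCoeff_eq_zero, leadingCoeff, h, coeff_sub, hQcoeff, hPcoeff, sub_self]
      have hipos : 1 ≤ i := by
        rcases Nat.eq_zero_or_pos i with h0 | h; swap
        · exact h
        exfalso
        apply hR
        subst h0
        have : (Q - P).natDegree = 0 := Nat.le_zero.mp hRdeg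
        exact absurd this hne
      omega
  intro z
  rw [← hQeval, ← hPeval, hQP]

lemma sum_range_cast (Δ : ℝ) (i : ℕ) (hi1 : 1 ≤ i) :
    ∑ t ∈ Finset.range i, (t:ℝ)*Δ^2/2 = ((i:ℝ)^2 - i)*Δ^2/4 := by
  have h2 := Finset.sum_range_id_mul_two i
  have hcast := congrArg (Nat.cast : ℕ → ℝ) h2
  push_cast [Nat.cast_sub hi1] at hcast
  have h3 : ∑ t ∈ Finset.range i, (t:ℝ)*Δ^2/2 = (∑ t ∈ Finset.range i, (t:ℝ)) * (Δ^2/2) := by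
    rw [Finset.sum_mul]
    exact Finset.sum_congr rfl fun t _ => by ring
  rw [h3]
  linear_combination (Δ^2/4) * hcast

theorem stmt1 (Δ : ℝ) (hΔ : 0 < Δ) (m : ℕ) (tu : ℕ → ℝ → ℝ)
    (h0 : tu 0 = gauss 0)
    (hrec : ∀ i : ℕ, 1 ≤ i →
      tu i = fun x => gauss ((i:ℝ) * Δ) x
        - ∑ j ∈ Finset.range i, (ip (gauss ((i:ℝ) * Δ)) (tu j) / ip (tu j) (tu j)) * tu j x) :
    ∀ i ≤ m,
      ip (tu i) (tu i) ≠ 0 ∧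
      (∀ a : ℝ, ip (gauss a) (tu i) =
        (Real.sqrt (4 * Real.pi))⁻¹ * Real.exp (-a^2 / 4) * Real.exp (-(i:ℝ) * Δ^2 / 4) *
          ∏ k ∈ Finset.range i, (Real.exp (a * Δ / 2 - (k:ℝ) * Δ^2 / 2) - 1)) ∧
      ip (tu i) (tu i) =
        (Real.sqrt (4 * Real.pi))⁻¹ *
          ∏ k ∈ Finset.range i, (1 - Real.exp (-(((k:ℝ)+1) * Δ^2 / 2))) := by
  have hC : (0:ℝ) < (Real.sqrt (4*Real.pi))⁻¹ := by positivity
  have hNpos : ∀ i : ℕ, 0 < (Real.sqrt (4*Real.pi))⁻¹ *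
      ∏ k ∈ Finset.range i, (1 - Real.exp (-(((k:ℝ)+1) * Δ^2 / 2))) := by
    intro i
    apply mul_pos hC
    apply Finset.prod_pos
    intro k _
    have h1 : Real.exp (-(((k:ℝ)+1) * Δ^2 / 2)) < 1 := by
      rw [Real.exp_lt_one_iff]
      have : (0:ℝ) < ((k:ℝ)+1) * Δ^2 / 2 := by positivity
      linarith
    linarith
  have key : ∀ i : ℕ,
      (∃ c : ℕ → ℝ, c i = 1 ∧ tu i = fun x => ∑ k ∈ Finset.range (i+1), c k * gauss ((k:ℝ) * Δ) x) ∧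
      (∀ j, j < i → ip (tu i) (tu j) = 0) ∧
      (∀ a : ℝ, ip (gauss a) (tu i) =
        (Real.sqrt (4 * Real.pi))⁻¹ * Real.exp (-a^2 / 4) * Real.exp (-(i:ℝ) * Δ^2 / 4) *
          ∏ k ∈ Finset.range i, (Real.exp (a * Δ / 2 - (k:ℝ) * Δ^2 / 2) - 1)) ∧
      ip (tu i) (tu i) =
        (Real.sqrt (4 * Real.pi))⁻¹ *
          ∏ k ∈ Finset.range i, (1 - Real.exp (-(((k:ℝ)+1) * Δ^2 / 2))) := by
    intro i
    induction i using Nat.strong_induction_on with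
    | _ i IH =>
    rcases Nat.eq_zero_or_pos i with hi0 | hipos
    · subst hi0
      have hrep0 : tu 0 = fun x => ∑ k ∈ Finset.range 1, (fun _ => (1:ℝ)) k * gauss ((k:ℝ) * Δ) x := by
        rw [h0]; funext x; simp
      refine ⟨⟨fun _ => 1, rfl, hrep0⟩, fun j hj => absurd hj (Nat.not_lt_zero j), ?_, ?_⟩
      · intro a
        rw [h0, ip_gauss]
        simp only [Nat.cast_zero, Finset.range_zero, Finset.prod_empty, mul_one, neg_zero,
          zero_mul, Real.exp_zero, sub_zero]
        norm_num
      · rw [h0, ip_gauss]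
        simp
    · -- inductive step
      have hi1 : 1 ≤ i := hipos
      have htu := hrec i hi1
      choose cf hcf1 hcf2 using fun j (hj : j < i) => (IH j hj).1
      have hNne : ∀ j, j < i → ip (tu j) (tu j) ≠ 0 := by
        intro j hj
        rw [(IH j hj).2.2.2]
        exact (hNpos j).ne'
      have hInt_g_tu : ∀ (b:ℝ) (j), j < i → Integrable (fun x => gauss b x * tu j x) := by
        intro b j hj
        rw [hcf2 j hj]
        exact integrable_gauss_combo b _ _ _
      have hInt_tu_tu : ∀ j, j < i → ∀ l, l < i → Integrable (fun x => tu j x * tu l x) := by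
        intro j hj l hl
        rw [hcf2 j hj, hcf2 l hl]
        exact integrable_combo_combo _ _ _ _ _ _
      -- orthogonality
      have horth : ∀ j, j < i → ip (tu i) (tu j) = 0 := by
        intro j hj
        rw [htu, ip_split_sub _ _ _ _ _ (hInt_g_tu _ j hj)
          (fun j' hj' => hInt_tu_tu j' (Finset.mem_range.1 hj') j hj)]
        rw [Finset.sum_eq_single j ?_ ?_]
        · rw [div_mul_cancel₀ _ (hNne j hj), sub_self]
        · intro j' hj' hne
          rcases lt_or_gt_of_ne hne with h | h
          · rw [ip_comm (tu j') (tu j), (IH j hj).2.1 j' h, mul_zero]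
          · rw [(IH j' (Finset.mem_range.1 hj')).2.1 j h, mul_zero]
        · intro h
          exact absurd (Finset.mem_range.2 hj) h
      -- representation of tu i
      obtain ⟨c, hc1, hcrep⟩ : ∃ c : ℕ → ℝ, c i = 1 ∧
          tu i = fun x => ∑ k ∈ Finset.range (i+1), c k * gauss ((k:ℝ)*Δ) x := by
        set cf' : ℕ → ℕ → ℝ := fun j k => if h : j < i then cf j h k else 0 with hcf'
        have hcf'2 : ∀ j, j < i →
            tu j = fun x => ∑ k ∈ Finset.range (j+1), cf' j k * gauss ((k:ℝ)*Δ) x := by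
          intro j h
          rw [hcf2 j h]
          simp only [hcf', dif_pos h]
        refine ⟨fun k => (if k = i then (1:ℝ) else 0) - ∑ j ∈ Finset.range i,
            (ip (gauss ((i:ℝ)*Δ)) (tu j) / ip (tu j) (tu j)) * (if k < j+1 then cf' j k else 0), ?_, ?_⟩
        · simp only []
          rw [if_true, Finset.sum_eq_zero, sub_zero]
          intro j hj
          rw [if_neg (by have := Finset.mem_range.1 hj; omega), mul_zero]
        · rw [htu]; funext x
          have hsplit : ∀ k, ((if k = i then (1:ℝ) else 0) - ∑ j ∈ Finset.range i,
                (ip (gauss ((i:ℝ)*Δ)) (tu j) / ip (tu j) (tu j)) * (if k < j+1 then cf' j k else 0))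
                  * gauss ((k:ℝ)*Δ) x
              = (if k = i then gauss ((k:ℝ)*Δ) x else 0) - ∑ j ∈ Finset.range i,
                  (ip (gauss ((i:ℝ)*Δ)) (tu j) / ip (tu j) (tu j))
                    * ((if k < j+1 then cf' j k else 0) * gauss ((k:ℝ)*Δ) x) := by
            intro k
            rw [sub_mul, Finset.sum_mul, ite_mul, one_mul, zero_mul]
            congr 1
            exact Finset.sum_congr rfl fun j _ => by ring
          rw [Finset.sum_congr rfl (fun k _ => hsplit k), Finset.sum_sub_distrib]
          congr 1
          · rw [Finset.sum_ite_eq' (Finset.range (i+1)) i (fun k => gauss ((k:ℝ)*Δ) x),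
              if_pos (Finset.mem_range.2 (by omega))]
          · rw [Finset.sum_comm]
            refine Finset.sum_congr rfl fun j hj => ?_
            have hji := Finset.mem_range.1 hj
            rw [← Finset.mul_sum]
            congr 1
            rw [hcf'2 j hji]
            simp only []
            rw [← Finset.sum_subset
              (by intro k hk; simp at hk ⊢; omega : Finset.range (j+1) ⊆ Finset.range (i+1))
              (by intro k _ hk
                  rw [if_neg (by simpa using hk), zero_mul])]
            exact Finset.sum_congr rfl fun k hk => by rw [if_pos (Finset.mem_range.1 hk)]
      -- roots (inner-product form)
      have hroot : ∀ t, t < i → ip (gauss ((t:ℝ)*Δ)) (tu i) = 0 := by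
        intro t
        induction t using Nat.strong_induction_on with
        | _ t IHt =>
        intro ht
        have hInt_tu_tui : ∀ j, j < i → Integrable (fun x => tu j x * tu i x) := by
          intro j hj
          rw [hcf2 j hj, hcrep]
          exact integrable_combo_combo _ _ _ _ _ _
        rcases Nat.eq_zero_or_pos t with h0' | htpos
        · subst h0'
          have hg : gauss (((0:ℕ):ℝ)*Δ) = tu 0 := by rw [h0]; norm_num
          rw [hg, ip_comm]
          exact horth 0 ht
        · have hgt : gauss ((t:ℝ)*Δ) = fun x => tu t x + ∑ j ∈ Finset.range t,
              (ip (gauss ((t:ℝ)*Δ)) (tu j) / ip (tu j) (tu j)) * tu j x := by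
            funext x
            have h := congrFun (hrec t htpos) x
            linarith [h]
          rw [hgt, ip_split_add _ _ _ _ _ (hInt_tu_tui t ht)
            (fun j hj => hInt_tu_tui j (lt_trans (Finset.mem_range.1 hj) ht))]
          rw [ip_comm (tu t) (tu i), horth t ht, Finset.sum_eq_zero, add_zero]
          intro j hj
          rw [ip_comm (tu j) (tu i), horth j (lt_trans (Finset.mem_range.1 hj) ht), mul_zero]
      -- evaluation form
      have hip : ∀ a : ℝ, ip (gauss a) (tu i) = (Real.sqrt (4*Real.pi))⁻¹ * Real.exp (-a^2/4) *
          ∑ k ∈ Finset.range (i+1),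
            (c k * Real.exp (-(k:ℝ)^2*Δ^2/4)) * Real.exp (a*Δ/2)^k := by
        intro a
        rw [hcrep, ip_gauss_combo, Finset.mul_sum]
        refine Finset.sum_congr rfl fun k _ => ?_
        rw [← Real.exp_nat_mul]
        have h1 : Real.exp (-(a - (k:ℝ)*Δ)^2/4)
            = Real.exp (-a^2/4) * (Real.exp (-(k:ℝ)^2*Δ^2/4) * Real.exp ((k:ℕ) * (a*Δ/2))) := by
          rw [← Real.exp_add, ← Real.exp_add]
          congr 1
          ring
        rw [h1]
        ring
      -- roots (sum form)
      have hroot' : ∀ t, t < i →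
          (∑ k ∈ Finset.range (i+1),
            (c k * Real.exp (-(k:ℝ)^2*Δ^2/4)) * Real.exp ((t:ℝ)*Δ^2/2)^k) = 0 := by
        intro t ht
        have h1 := hip ((t:ℝ)*Δ)
        rw [hroot t ht] at h1
        rw [show (t:ℝ)*Δ*Δ/2 = (t:ℝ)*Δ^2/2 by ring] at h1
        by_contra hne
        exact (mul_ne_zero (mul_ne_zero hC.ne' (Real.exp_ne_zero _)) hne) h1.symm
      have hQP := poly_step Δ hΔ i c hc1 hroot'
      have hsum := sum_range_cast Δ i hi1
      -- final formula
      have hform : ∀ a : ℝ, ip (gauss a) (tu i) =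
          (Real.sqrt (4 * Real.pi))⁻¹ * Real.exp (-a^2 / 4) * Real.exp (-(i:ℝ) * Δ^2 / 4) *
            ∏ k ∈ Finset.range i, (Real.exp (a * Δ / 2 - (k:ℝ) * Δ^2 / 2) - 1) := by
        intro a
        rw [hip a, hQP (Real.exp (a*Δ/2))]
        have hprod : ∏ t ∈ Finset.range i, (Real.exp (a*Δ/2) - Real.exp ((t:ℝ)*Δ^2/2))
            = Real.exp (∑ t ∈ Finset.range i, (t:ℝ)*Δ^2/2)
              * ∏ k ∈ Finset.range i, (Real.exp (a * Δ / 2 - (k:ℝ) * Δ^2 / 2) - 1) := by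
          rw [Real.exp_sum, ← Finset.prod_mul_distrib]
          refine Finset.prod_congr rfl fun t _ => ?_
          rw [mul_sub, mul_one, ← Real.exp_add,
            show (t:ℝ)*Δ^2/2 + (a*Δ/2 - (t:ℝ)*Δ^2/2) = a*Δ/2 by ring]
        rw [hprod]
        have hee : Real.exp (-(i:ℝ)^2*Δ^2/4) * Real.exp (∑ t ∈ Finset.range i, (t:ℝ)*Δ^2/2)
            = Real.exp (-(i:ℝ)*Δ^2/4) := by
          rw [← Real.exp_add]
          congr 1
          rw [hsum]; ring
        rw [← hee]
        ring
      -- norm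
      have hnorm : ip (tu i) (tu i) =
          (Real.sqrt (4 * Real.pi))⁻¹ *
            ∏ k ∈ Finset.range i, (1 - Real.exp (-(((k:ℝ)+1) * Δ^2 / 2))) := by
        have h8 := congrArg (fun f => ip f (tu i)) htu
        rw [ip_split_sub _ _ _ _ _ (by rw [hcrep]; exact integrable_gauss_combo _ _ _ _)
          (fun j hj => by
            rw [hcf2 j (Finset.mem_range.1 hj), hcrep]
            exact integrable_combo_combo _ _ _ _ _ _)] at h8
        rw [Finset.sum_eq_zero (fun j hj => by
          rw [ip_comm (tu j) (tu i), horth j (Finset.mem_range.1 hj), mul_zero]), sub_zero] at h8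
        rw [h8, hform ((i:ℝ)*Δ)]
        have hfac : ∀ k ∈ Finset.range i, Real.exp ((i:ℝ)*Δ*Δ/2 - (k:ℝ)*Δ^2/2) - 1
            = Real.exp ((i:ℝ)*Δ*Δ/2 - (k:ℝ)*Δ^2/2)
              * (1 - Real.exp (-((i:ℝ)*Δ*Δ/2 - (k:ℝ)*Δ^2/2))) := by
          intro k _
          rw [mul_sub, mul_one, ← Real.exp_add, add_neg_cancel, Real.exp_zero]
        rw [Finset.prod_congr rfl hfac, Finset.prod_mul_distrib, ← Real.exp_sum]
        have hsum2 : ∑ k ∈ Finset.range i, ((i:ℝ)*Δ*Δ/2 - (k:ℝ)*Δ^2/2) = ((i:ℝ)^2 + i)*Δ^2/4 := by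
          rw [Finset.sum_sub_distrib, Finset.sum_const, Finset.card_range, nsmul_eq_mul]
          linear_combination -hsum
        rw [hsum2]
        have hrefl : ∏ k ∈ Finset.range i, (1 - Real.exp (-((i:ℝ)*Δ*Δ/2 - (k:ℝ)*Δ^2/2)))
            = ∏ k ∈ Finset.range i, (1 - Real.exp (-(((k:ℝ)+1) * Δ^2 / 2))) := by
          rw [← Finset.prod_range_reflect (fun k => 1 - Real.exp (-(((k:ℝ)+1) * Δ^2 / 2))) i]
          refine Finset.prod_congr rfl fun k hk => ?_
          have hki := Finset.mem_range.1 hk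
          have hc : ((i - 1 - k : ℕ):ℝ) = (i:ℝ) - 1 - k := by
            have h1 : i - 1 - k = i - (1 + k) := by omega
            rw [h1, Nat.cast_sub (by omega)]
            push_cast
            ring
          congr 2
          rw [hc]
          ring
        rw [hrefl]
        have hconst : Real.exp (-((i:ℝ)*Δ)^2/4) * Real.exp (-(i:ℝ)*Δ^2/4)
            * Real.exp (((i:ℝ)^2 + i)*Δ^2/4) = 1 := by
          rw [← Real.exp_add, ← Real.exp_add,
            show -((i:ℝ)*Δ)^2/4 + -(i:ℝ)*Δ^2/4 + ((i:ℝ)^2 + i)*Δ^2/4 = 0 by ring, Real.exp_zero]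
        linear_combination ((Real.sqrt (4 * Real.pi))⁻¹ *
          ∏ k ∈ Finset.range i, (1 - Real.exp (-(((k:ℝ)+1) * Δ^2 / 2)))) * hconst
      exact ⟨⟨c, hc1, hcrep⟩, horth, hform, hnorm⟩
  intro i _
  obtain ⟨-, -, hform, hnorm⟩ := key i
  exact ⟨by rw [hnorm]; exact (hNpos i).ne', hform, hnorm⟩
end

section
/- There exist constants C > 0 and m₀ ∈ ℕ such that for every integer m ≥ m₀, setting Δ = 1/m and α_i = e^{−1/4} e^{i²Δ²/4} · [∏_{j=0, j≠i}^{m} (e^{−Δ/2} − e^{jΔ²/2})] / [∏_{j=0, j≠i}^{m} (e^{iΔ²/2} − e^{jΔ²/2})] for 0 ≤ i ≤ m (these are the coefficients of the orthogonal projection of g₋₁ onto span{g_{jΔ} : 0 ≤ j ≤ m}), one has Σ_{i=0}^{m} |α_i| ≤ 2^{C·m}. -/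
/-!
Each factor of the numerator of `α_i` is a difference of exponentials at points at distance
`O(Δ)` inside `[-1/2, 1/2]`, hence is `O(Δ)`, while `|e^a - e^b| ≥ |a - b|` for `a, b ≥ 0`
bounds the denominator below by `(Δ²/2)^m i! (m-i)!`. So `|α_i| ≤ (2√e m)^m / (i! (m-i)!)`,
and summing over `i` gives `(4√e m)^m / m! ≤ (4 e^{3/2})^m ≤ 32^m`.
-/

open Finset Real Nat

lemma card_erase_range_succ {m i : ℕ} (hi : i ≤ m) : #((range (m + 1)).erase i) = m := by
  rw [card_erase_of_mem (mem_range.2 (by omega)), card_range, Nat.add_sub_cancel]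

lemma prod_erase_range_abs_sub_eq {m i : ℕ} (hi : i ≤ m) :
    ∏ j ∈ (range (m + 1)).erase i, |(i : ℝ) - j| = (i ! * (m - i)! : ℝ) := by
  have hsplit : (range (m + 1)).erase i = range i ∪ Ico (i + 1) (m + 1) := by
    ext j
    simp only [mem_erase, mem_range, mem_union, mem_Ico]
    omega
  have hdisj : Disjoint (range i) (Ico (i + 1) (m + 1)) := by
    rw [disjoint_left]
    intro j hj hj'
    simp only [mem_range, mem_Ico] at hj hj'
    omega
  have hbelow : ∏ j ∈ range i, |(i : ℝ) - j| = i ! := by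
    rw [← prod_range_reflect, ← prod_range_add_one_eq_factorial, Nat.cast_prod]
    refine prod_congr rfl fun j hj => ?_
    rw [mem_range] at hj
    rw [show i - 1 - j = i - (j + 1) by omega, Nat.cast_sub (by omega)]
    push_cast
    rw [abs_of_nonneg (by ring_nf; positivity)]
    ring
  have habove : ∏ j ∈ Ico (i + 1) (m + 1), |(i : ℝ) - j| = (m - i)! := by
    rw [prod_Ico_eq_prod_range, show m + 1 - (i + 1) = m - i by omega,
      ← prod_range_add_one_eq_factorial, Nat.cast_prod]
    refine prod_congr rfl fun k _ => ?_
    push_cast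
    rw [show (i : ℝ) - (i + 1 + k) = -(k + 1) by ring, abs_neg, abs_of_nonneg (by positivity)]
  rw [hsplit, prod_union hdisj, hbelow, habove]

lemma sub_le_exp_sub_exp {a b : ℝ} (ha : 0 ≤ a) (hab : a ≤ b) : b - a ≤ exp b - exp a := by
  have hexp : exp b = exp a * exp (b - a) := by rw [← exp_add, add_sub_cancel]
  nlinarith [add_one_le_exp (b - a), one_le_exp ha]

lemma abs_sub_le_abs_exp_sub_exp {a b : ℝ} (ha : 0 ≤ a) (hb : 0 ≤ b) :
    |a - b| ≤ |exp a - exp b| := by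
  rcases le_total a b with hab | hab
  · rw [abs_sub_comm, abs_sub_comm (exp a), abs_of_nonneg (sub_nonneg.2 hab),
      abs_of_nonneg (sub_nonneg.2 (exp_le_exp.2 hab))]
    exact sub_le_exp_sub_exp ha hab
  · rw [abs_of_nonneg (sub_nonneg.2 hab), abs_of_nonneg (sub_nonneg.2 (exp_le_exp.2 hab))]
    exact sub_le_exp_sub_exp hb hab

lemma abs_exp_sub_exp_le {a b : ℝ} (hab : a ≤ b) : |exp a - exp b| ≤ (b - a) * exp b := by
  have hexp : exp a = exp b * exp (a - b) := by rw [← exp_add, add_sub_cancel]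
  rw [abs_sub_comm, abs_of_nonneg (sub_nonneg.2 (exp_le_exp.2 hab))]
  nlinarith [add_one_le_exp (a - b), exp_pos b]

lemma pow_mul_factorial_le_prod_abs_exp_sub_exp {h : ℝ} (hh : 0 ≤ h) {m i : ℕ} (hi : i ≤ m) :
    h ^ m * (i ! * (m - i)!) ≤ ∏ j ∈ (range (m + 1)).erase i, |exp (i * h) - exp (j * h)| := by
  calc h ^ m * (i ! * (m - i)! : ℝ)
      = ∏ j ∈ (range (m + 1)).erase i, |(i : ℝ) * h - j * h| := by
        simp_rw [← sub_mul, abs_mul, prod_mul_distrib, prod_const, card_erase_range_succ hi,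
          abs_of_nonneg hh, prod_erase_range_abs_sub_eq hi, mul_comm]
    _ ≤ _ := prod_le_prod (fun _ _ => abs_nonneg _)
        fun j _ => abs_sub_le_abs_exp_sub_exp (by positivity) (by positivity)

lemma sum_range_inv_factorial_mul_factorial (m : ℕ) :
    ∑ i ∈ range (m + 1), ((i ! * (m - i)! : ℝ))⁻¹ = 2 ^ m / m ! := by
  have hchoose : ∀ i ∈ range (m + 1), ((i ! * (m - i)! : ℝ))⁻¹ = m.choose i / m ! := by
    intro i hi
    rw [Nat.cast_choose ℝ (by simpa [Nat.lt_succ_iff] using hi)]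
    field_simp
  rw [sum_congr rfl hchoose, ← sum_div, ← Nat.cast_sum, Nat.sum_range_choose]
  push_cast
  rfl

/-- The coefficient `α_i` of the statement, for an arbitrary spacing `Δ` in place of `1/m`. -/
noncomputable def projCoeff (Δ : ℝ) (m i : ℕ) : ℝ :=
  exp (-(1 : ℝ) / 4) * exp ((i : ℝ) ^ 2 * Δ ^ 2 / 4) *
    (∏ j ∈ (range (m + 1)).erase i, (exp (-Δ / 2) - exp ((j : ℝ) * Δ ^ 2 / 2))) /
    (∏ j ∈ (range (m + 1)).erase i, (exp ((i : ℝ) * Δ ^ 2 / 2) - exp ((j : ℝ) * Δ ^ 2 / 2)))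

section projCoeff

variable {Δ : ℝ} {m : ℕ}

lemma abs_projCoeff_le (hΔ : 0 < Δ) (hmΔ : m * Δ ≤ 1) {i : ℕ} (hi : i ≤ m) :
    |projCoeff Δ m i| ≤ (2 * exp (1 / 2) / Δ) ^ m / (i ! * (m - i)!) := by
  have hiΔ : i * Δ ≤ 1 := le_trans (by gcongr) hmΔ
  have hfront : exp (-(1 : ℝ) / 4) * exp ((i : ℝ) ^ 2 * Δ ^ 2 / 4) ≤ 1 := by
    rw [← exp_add, exp_le_one_iff]
    nlinarith [mul_nonneg (Nat.cast_nonneg i) hΔ.le]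
  have hnum : |∏ j ∈ (range (m + 1)).erase i, (exp (-Δ / 2) - exp ((j : ℝ) * Δ ^ 2 / 2))|
      ≤ (Δ * exp (1 / 2)) ^ m := by
    rw [abs_prod]
    refine (prod_le_prod (fun _ _ => abs_nonneg _) fun j hj => ?_).trans_eq
      (by rw [prod_const, card_erase_range_succ hi])
    have hjΔ : j * Δ ≤ 1 :=
      le_trans (by gcongr; exact_mod_cast Nat.lt_succ_iff.1 (mem_range.1 (mem_of_mem_erase hj)))
        hmΔ
    have hj0 : 0 ≤ (j : ℝ) * Δ := by positivity
    have hjsq : (j : ℝ) ≤ j ^ 2 := by exact_mod_cast Nat.le_self_pow two_ne_zero j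
    calc _ ≤ ((j : ℝ) * Δ ^ 2 / 2 - -Δ / 2) * exp ((j : ℝ) * Δ ^ 2 / 2) :=
          abs_exp_sub_exp_le (by nlinarith)
      _ ≤ Δ * exp (1 / 2) := by gcongr <;> nlinarith
  have hden : (Δ ^ 2 / 2) ^ m * (i ! * (m - i)!) ≤
      |∏ j ∈ (range (m + 1)).erase i, (exp ((i : ℝ) * Δ ^ 2 / 2) - exp ((j : ℝ) * Δ ^ 2 / 2))| := by
    simp_rw [abs_prod, mul_div_assoc]
    exact pow_mul_factorial_le_prod_abs_exp_sub_exp (by positivity) hi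
  calc |projCoeff Δ m i|
      ≤ 1 * (Δ * exp (1 / 2)) ^ m / ((Δ ^ 2 / 2) ^ m * (i ! * (m - i)!)) := by
        rw [projCoeff, abs_div, abs_mul, abs_of_pos (by positivity)]
        gcongr
    _ = (2 * exp (1 / 2) / Δ) ^ m / (i ! * (m - i)!) := by
        rw [one_mul, ← div_div, ← div_pow]
        congr 2
        field_simp

lemma sum_abs_projCoeff_le (hΔ : 0 < Δ) (hmΔ : m * Δ ≤ 1) :
    ∑ i ∈ range (m + 1), |projCoeff Δ m i| ≤ (4 * exp (1 / 2) / Δ) ^ m / m ! :=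
  calc ∑ i ∈ range (m + 1), |projCoeff Δ m i|
      ≤ ∑ i ∈ range (m + 1), (2 * exp (1 / 2) / Δ) ^ m * ((i ! * (m - i)! : ℝ))⁻¹ :=
        sum_le_sum fun i hi =>
          (abs_projCoeff_le hΔ hmΔ (Nat.lt_succ_iff.1 (mem_range.1 hi))).trans_eq
            (div_eq_mul_inv _ _)
    _ = (4 * exp (1 / 2) / Δ) ^ m / m ! := by
        rw [← mul_sum, sum_range_inv_factorial_mul_factorial, ← mul_div_assoc, ← mul_pow]
        ring

end projCoeff

lemma four_mul_exp_half_mul_pow_div_factorial_le (m : ℕ) :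
    (4 * exp (1 / 2) * m) ^ m / m ! ≤ (32 : ℝ) ^ m :=
  calc (4 * exp (1 / 2) * m) ^ m / m ! = (4 * exp (1 / 2)) ^ m * ((m : ℝ) ^ m / m !) := by
        rw [mul_pow, mul_div_assoc]
    _ ≤ (4 * exp (1 / 2)) ^ m * exp 1 ^ m := by
        rw [exp_one_pow]
        gcongr
        exact Real.pow_div_factorial_le_exp _ (Nat.cast_nonneg m) m
    _ ≤ 32 ^ m := by
        rw [← mul_pow]
        gcongr
        nlinarith [exp_one_lt_d9, exp_le_exp.2 (show (1 : ℝ) / 2 ≤ 1 by norm_num), exp_pos 1]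

theorem stmt3 :
    ∃ C > (0:ℝ), ∃ m₀ : ℕ, ∀ m : ℕ, m₀ ≤ m →
      ∑ i ∈ Finset.range (m+1),
        |Real.exp (-(1:ℝ)/4) * Real.exp ((i:ℝ)^2 * (1/(m:ℝ))^2 / 4) *
          (∏ j ∈ (Finset.range (m+1)).erase i,
              (Real.exp (-(1/(m:ℝ))/2) - Real.exp ((j:ℝ) * (1/(m:ℝ))^2 / 2))) /
          (∏ j ∈ (Finset.range (m+1)).erase i,
              (Real.exp ((i:ℝ) * (1/(m:ℝ))^2 / 2) - Real.exp ((j:ℝ) * (1/(m:ℝ))^2 / 2)))|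
        ≤ (2:ℝ) ^ (C * (m:ℝ)) := by
  refine ⟨5, by norm_num, 1, fun m hm => ?_⟩
  have hm0 : (0 : ℝ) < m := by exact_mod_cast hm
  calc ∑ i ∈ range (m + 1), |projCoeff (1 / m) m i|
      ≤ (4 * exp (1 / 2) / (1 / m)) ^ m / m ! :=
        sum_abs_projCoeff_le (by positivity) (by rw [mul_one_div_cancel hm0.ne'])
    _ ≤ (32 : ℝ) ^ m := by
        rw [div_div_eq_mul_div, div_one]
        exact four_mul_exp_half_mul_pow_div_factorial_le m
    _ = 2 ^ ((5 : ℝ) * m) := by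
        rw [rpow_mul (by norm_num), rpow_natCast]
        norm_num
end

section
/- There exists an absolute constant C > 0 such that for all probability measures ν and ν′ on ℝ supported in the interval [−2, 1], the Gaussian mixture densities f(x) = ∫ g_μ(x) dν(μ) and f′(x) = ∫ g_μ(x) dν′(μ) satisfy ‖f − f′‖₁ ≤ C · ‖f − f′‖₂^{2/3}. -/
open MeasureTheory Real

/-- The Gaussian mixture density with mixing measure `ν`. -/
noncomputable def mix (ν : Measure ℝ) (x : ℝ) : ℝ := ∫ μ, gauss μ x ∂ν

/-!
Write `h = f - f'`. On `[-T, T]` the AM-GM inequality gives `|h| ≤ h² / (2δ) + δ / 2`, and off it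
`|h| ≤ |x| |h| / T`; integrating, `‖h‖₁ ≤ ‖h‖₂² / (2δ) + δT + (∫ |x| |h|) / T`. The first moment
`∫ |x| |h|` is bounded uniformly, since by Fubini it is controlled by the first absolute moments of
the unit Gaussians `N(μ, 1)` with `|μ| ≤ 2`. The choice `δ = ‖h‖₂^{4/3}`, `T = ‖h‖₂^{-2/3}`
balances the three terms.
-/

open ProbabilityTheory Set

lemma gauss_eq_gaussianPDFReal (μ : ℝ) : gauss μ = gaussianPDFReal μ 1 := by
  ext x
  simp [gauss, gaussianPDFReal]

lemma gauss_nonneg (μ x : ℝ) : 0 ≤ gauss μ x := by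
  unfold gauss; positivity

lemma gauss_le_one (μ x : ℝ) : gauss μ x ≤ 1 := by
  have hexp : rexp (-(x - μ) ^ 2 / 2) ≤ 1 := exp_le_one_iff.2 (by nlinarith [sq_nonneg (x - μ)])
  have hsqrt : 1 ≤ √(2 * π) := one_le_sqrt.2 (by linarith [pi_gt_three])
  calc gauss μ x ≤ (√(2 * π))⁻¹ * 1 := by unfold gauss; gcongr
    _ ≤ 1 := by simpa using inv_le_one_of_one_le₀ hsqrt

lemma continuous_uncurry_gauss : Continuous (Function.uncurry gauss) := by
  unfold Function.uncurry gauss; fun_prop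

lemma integrable_gauss (μ : ℝ) : Integrable (gauss μ) := by
  rw [gauss_eq_gaussianPDFReal]; exact integrable_gaussianPDFReal μ 1

lemma integral_gauss (μ : ℝ) : ∫ x, gauss μ x = 1 := by
  rw [gauss_eq_gaussianPDFReal]; exact integral_gaussianPDFReal_eq_one μ one_ne_zero

lemma integral_mul_gauss (μ : ℝ) (f : ℝ → ℝ) :
    ∫ x, f x * gauss μ x = ∫ x, f x ∂gaussianReal μ 1 := by
  simp [integral_gaussianReal_eq_integral_smul one_ne_zero, gauss_eq_gaussianPDFReal, mul_comm]

lemma integrable_mul_gauss_iff (μ : ℝ) {f : ℝ → ℝ} :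
    Integrable (fun x => f x * gauss μ x) ↔ Integrable f (gaussianReal μ 1) := by
  rw [gaussianReal_of_var_ne_zero _ one_ne_zero, integrable_withDensity_iff_integrable_smul'
    (measurable_gaussianPDF _ _) (ae_of_all _ fun _ => gaussianPDF_lt_top)]
  simp [toReal_gaussianPDF, gauss_eq_gaussianPDFReal, mul_comm]

lemma integral_sq_gaussianReal (μ : ℝ) (v : NNReal) :
    ∫ x, x ^ 2 ∂gaussianReal μ v = v + μ ^ 2 := by
  have h := variance_eq_sub (memLp_id_gaussianReal (μ := μ) (v := v) 2)
  simp only [variance_id_gaussianReal, Pi.pow_apply, id_eq, integral_id_gaussianReal] at h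
  linarith

lemma integral_abs_gaussianReal_le (μ : ℝ) (v : NNReal) :
    ∫ x, |x| ∂gaussianReal μ v ≤ (1 + v + μ ^ 2) / 2 := by
  have hsq : Integrable (fun x => x ^ 2) (gaussianReal μ v) :=
    (memLp_id_gaussianReal 2).integrable_sq
  calc ∫ x, |x| ∂gaussianReal μ v ≤ ∫ x, (1 + x ^ 2) / 2 ∂gaussianReal μ v := by
        refine integral_mono ((memLp_id_gaussianReal 1).integrable le_rfl).abs
          ((integrable_const _).add hsq |>.div_const _) fun x => ?_
        nlinarith [sq_nonneg (|x| - 1), sq_abs x]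
    _ = (1 + v + μ ^ 2) / 2 := by
        rw [integral_div, integral_add (integrable_const _) hsq, integral_sq_gaussianReal]
        rw [integral_const, probReal_univ, smul_eq_mul, mul_one]; ring

lemma integrable_abs_mul_gauss (μ : ℝ) : Integrable (fun x => |x| * gauss μ x) :=
  (integrable_mul_gauss_iff μ).2 ((memLp_id_gaussianReal 1).integrable le_rfl).abs

lemma integral_abs_mul_gauss_le (μ : ℝ) : ∫ x, |x| * gauss μ x ≤ 1 + μ ^ 2 / 2 := by
  rw [integral_mul_gauss]
  linarith [integral_abs_gaussianReal_le μ 1, NNReal.coe_one]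

lemma mix_nonneg (ν : Measure ℝ) (x : ℝ) : 0 ≤ mix ν x :=
  integral_nonneg fun μ => gauss_nonneg μ x

lemma mix_le_one (ν : Measure ℝ) [IsProbabilityMeasure ν] (x : ℝ) : mix ν x ≤ 1 := by
  simpa [mix] using integral_mono_of_nonneg (μ := ν) (ae_of_all _ fun μ => gauss_nonneg μ x)
    (integrable_const (1 : ℝ)) (ae_of_all _ fun μ => gauss_le_one μ x)

section Mixture

variable {ν : Measure ℝ} [IsFiniteMeasure ν] {w : ℝ → ℝ} {B : ℝ}

lemma integrable_weight_mul_gauss_prod (hw : Continuous w) (hw0 : ∀ x, 0 ≤ w x)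
    (hint : ∀ μ, Integrable (fun x => w x * gauss μ x))
    (hB : ∀ᵐ μ ∂ν, ∫ x, w x * gauss μ x ≤ B) :
    Integrable (fun p : ℝ × ℝ => w p.2 * gauss p.1 p.2) (ν.prod volume) := by
  have hcont : Continuous (fun p : ℝ × ℝ => w p.2 * gauss p.1 p.2) :=
    (hw.comp continuous_snd).mul continuous_uncurry_gauss
  refine (integrable_prod_iff hcont.aestronglyMeasurable).2 ⟨ae_of_all _ hint, ?_⟩
  refine Integrable.mono' (integrable_const B)
    (hcont.norm.stronglyMeasurable.integral_prod_right').aestronglyMeasurable ?_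
  filter_upwards [hB] with μ hμ
  have hnn : ∀ x, 0 ≤ w x * gauss μ x := fun x => mul_nonneg (hw0 x) (gauss_nonneg μ x)
  simp_rw [Real.norm_of_nonneg (hnn _)]
  rwa [Real.norm_of_nonneg (integral_nonneg hnn)]

theorem integrable_weight_mul_mix_and_integral_le (hw : Continuous w) (hw0 : ∀ x, 0 ≤ w x)
    (hint : ∀ μ, Integrable (fun x => w x * gauss μ x))
    (hB : ∀ᵐ μ ∂ν, ∫ x, w x * gauss μ x ≤ B) :
    Integrable (fun x => w x * mix ν x) ∧ ∫ x, w x * mix ν x ≤ B * ν.real univ := by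
  have hprod := integrable_weight_mul_gauss_prod hw hw0 hint hB
  have hmix : (fun x => w x * mix ν x) = fun x => ∫ μ, w x * gauss μ x ∂ν := by
    ext x; exact (integral_const_mul _ _).symm
  refine ⟨hmix ▸ hprod.integral_prod_right, ?_⟩
  rw [hmix, (integral_integral_swap (f := fun μ x => w x * gauss μ x) hprod).symm]
  calc ∫ μ, (∫ x, w x * gauss μ x) ∂ν ≤ ∫ _, B ∂ν :=
        integral_mono_ae hprod.integral_prod_left (integrable_const B) hB
    _ = B * ν.real univ := by rw [integral_const, smul_eq_mul, mul_comm]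

variable (ν) in
lemma integrable_mix : Integrable (mix ν) := by
  simpa using (integrable_weight_mul_mix_and_integral_le (ν := ν) (w := fun _ => 1) (B := 1)
    continuous_const (fun _ => zero_le_one) (by simpa using integrable_gauss)
    (ae_of_all _ fun μ => by simp [integral_gauss])).1

lemma integrable_abs_mul_mix_and_integral_le [IsProbabilityMeasure ν] {R : ℝ}
    (hR : ∀ᵐ μ ∂ν, |μ| ≤ R) :
    Integrable (fun x => |x| * mix ν x) ∧ ∫ x, |x| * mix ν x ≤ 1 + R ^ 2 / 2 := by
  simpa using integrable_weight_mul_mix_and_integral_le (ν := ν) continuous_abs abs_nonneg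
    integrable_abs_mul_gauss (by
      filter_upwards [hR] with μ hμ
      nlinarith [integral_abs_mul_gauss_le μ, abs_nonneg μ, sq_abs μ])

end Mixture

section MixtureDifference

variable (ν ν' : Measure ℝ) [IsProbabilityMeasure ν] [IsProbabilityMeasure ν']

lemma abs_mix_sub_mix_le_one (x : ℝ) : |mix ν x - mix ν' x| ≤ 1 :=
  abs_sub_le_iff.2 ⟨by linarith [mix_le_one ν x, mix_nonneg ν' x],
    by linarith [mix_le_one ν' x, mix_nonneg ν x]⟩

lemma integrable_sq_mix_sub_mix : Integrable (fun x => (mix ν x - mix ν' x) ^ 2) := by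
  have hdiff := (integrable_mix ν).sub (integrable_mix ν')
  refine hdiff.abs.mono' (hdiff.aestronglyMeasurable.pow 2) (ae_of_all _ fun x => ?_)
  rw [norm_pow, Real.norm_eq_abs, sq]
  exact mul_le_of_le_one_left (abs_nonneg _) (abs_mix_sub_mix_le_one ν ν' x)

lemma integrable_abs_mul_abs_mix_sub_mix_and_integral_le {R : ℝ} (hR : ∀ᵐ μ ∂ν, |μ| ≤ R)
    (hR' : ∀ᵐ μ ∂ν', |μ| ≤ R) :
    Integrable (fun x => |x| * |mix ν x - mix ν' x|) ∧
      ∫ x, |x| * |mix ν x - mix ν' x| ≤ 2 + R ^ 2 := by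
  obtain ⟨hint, hle⟩ := integrable_abs_mul_mix_and_integral_le hR
  obtain ⟨hint', hle'⟩ := integrable_abs_mul_mix_and_integral_le hR'
  have hpt : ∀ x, |x| * |mix ν x - mix ν' x| ≤ |x| * mix ν x + |x| * mix ν' x := fun x => by
    rw [← mul_add]
    refine mul_le_mul_of_nonneg_left ?_ (abs_nonneg x)
    exact (abs_sub _ _).trans (by rw [abs_of_nonneg (mix_nonneg ν x),
      abs_of_nonneg (mix_nonneg ν' x)])
  have hmeas : AEStronglyMeasurable (fun x => |x| * |mix ν x - mix ν' x|) volume :=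
    continuous_abs.aestronglyMeasurable.mul
      ((integrable_mix ν).sub (integrable_mix ν')).aestronglyMeasurable.norm
  refine ⟨(hint.add hint').mono' hmeas (ae_of_all _ fun x => ?_), ?_⟩
  · rw [Real.norm_of_nonneg (by positivity)]; exact hpt x
  · calc ∫ x, |x| * |mix ν x - mix ν' x| ≤ ∫ x, (|x| * mix ν x + |x| * mix ν' x) :=
          integral_mono_of_nonneg (ae_of_all _ fun x => by positivity) (hint.add hint')
            (ae_of_all _ hpt)
      _ ≤ 2 + R ^ 2 := by rw [integral_add hint hint']; linarith

end MixtureDifference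

theorem integral_abs_le_of_integrable_sq_of_integrable_moment {h : ℝ → ℝ}
    (hsq : Integrable (fun x => h x ^ 2)) (hmom : Integrable (fun x => |x| * |h x|))
    {T δ : ℝ} (hT : 0 < T) (hδ : 0 < δ) :
    ∫ x, |h x| ≤ (∫ x, h x ^ 2) / (2 * δ) + δ * T + (∫ x, |x| * |h x|) / T := by
  have hpt : ∀ x, |h x| ≤ h x ^ 2 / (2 * δ) + (Icc (-T) T).indicator (fun _ => δ / 2) x
      + |x| * |h x| / T := by
    intro x
    by_cases hx : x ∈ Icc (-T) T
    · have hamgm : |h x| ≤ h x ^ 2 / (2 * δ) + δ / 2 := by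
        rw [div_add' _ _ _ (by positivity), le_div_iff₀ (by positivity)]
        nlinarith [sq_nonneg (|h x| - δ), sq_abs (h x)]
      rw [indicator_of_mem hx]
      linarith [div_nonneg (mul_nonneg (abs_nonneg x) (abs_nonneg (h x))) hT.le]
    · have hxT : T ≤ |x| := by
        simp only [mem_Icc, not_and_or, not_le] at hx
        cases hx <;> [linarith [neg_abs_le x]; linarith [le_abs_self x]]
      have htail : |h x| ≤ |x| * |h x| / T := by
        rw [le_div_iff₀ hT, mul_comm]
        exact mul_le_mul_of_nonneg_right hxT (abs_nonneg _)
      rw [indicator_of_notMem hx]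
      linarith [div_nonneg (sq_nonneg (h x)) (by positivity : (0 : ℝ) ≤ 2 * δ)]
  have hsq' : Integrable (fun x => h x ^ 2 / (2 * δ)) := hsq.div_const _
  have hbulk : Integrable (fun x => (Icc (-T) T).indicator (fun _ => δ / 2) x) :=
    (integrable_indicator_iff measurableSet_Icc).2 (integrableOn_const measure_Icc_lt_top.ne)
  have hmom' : Integrable (fun x => |x| * |h x| / T) := hmom.div_const _
  have hsq_bulk : Integrable
      (fun x => h x ^ 2 / (2 * δ) + (Icc (-T) T).indicator (fun _ => δ / 2) x) := hsq'.add hbulk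
  calc ∫ x, |h x| ≤ ∫ x, (h x ^ 2 / (2 * δ) + (Icc (-T) T).indicator (fun _ => δ / 2) x
        + |x| * |h x| / T) :=
        integral_mono_of_nonneg (ae_of_all _ fun x => abs_nonneg _)
          (hsq_bulk.add hmom') (ae_of_all _ hpt)
    _ = (∫ x, h x ^ 2) / (2 * δ) + δ * T + (∫ x, |x| * |h x|) / T := by
        rw [integral_add hsq_bulk hmom', integral_add hsq' hbulk, integral_div, integral_div,
          integral_indicator_const _ measurableSet_Icc, Real.volume_real_Icc,
          max_eq_left (by linarith), smul_eq_mul]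
        ring

theorem le_mul_rpow_two_thirds_of_forall_le {L ε M : ℝ} (hε : 0 ≤ ε) (hM : 0 ≤ M)
    (h : ∀ T δ : ℝ, 0 < T → 0 < δ → L ≤ ε ^ 2 / (2 * δ) + δ * T + M / T) :
    L ≤ (3 / 2 + M) * ε ^ ((2 : ℝ) / 3) := by
  rcases hε.eq_or_lt with rfl | hε
  · rw [zero_rpow (by norm_num), mul_zero]
    refine le_of_forall_pos_le_add fun η hη => ?_
    set s := η / (1 + M)
    have hs : 0 < s := by positivity
    calc L ≤ 0 ^ 2 / (2 * s ^ 2) + s ^ 2 * (1 / s) + M / (1 / s) :=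
          h _ _ (by positivity) (by positivity)
      _ = (1 + M) * s := by field_simp; ring
      _ = 0 + η := by rw [zero_add, mul_div_cancel₀ _ (by positivity)]
  · set s := ε ^ ((2 : ℝ) / 3) with hs
    have hs0 : 0 < s := rpow_pos_of_pos hε _
    have hs3 : s ^ 3 = ε ^ 2 := by
      rw [hs, ← rpow_natCast, ← rpow_mul hε.le]; norm_num
    calc L ≤ ε ^ 2 / (2 * s ^ 2) + s ^ 2 * (1 / s) + M / (1 / s) :=
          h _ _ (by positivity) (by positivity)
      _ = (3 / 2 + M) * s := by rw [← hs3]; field_simp; ring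

theorem stmt6 :
    ∃ C > (0:ℝ), ∀ ν ν' : Measure ℝ,
      IsProbabilityMeasure ν → IsProbabilityMeasure ν' →
      ν (Set.Icc (-2 : ℝ) 1)ᶜ = 0 → ν' (Set.Icc (-2 : ℝ) 1)ᶜ = 0 →
      (∫ x, |mix ν x - mix ν' x|)
        ≤ C * (Real.sqrt (∫ x, (mix ν x - mix ν' x)^2)) ^ ((2:ℝ)/3) := by
  refine ⟨3 / 2 + 6, by norm_num, fun ν ν' _ _ hν hν' => ?_⟩
  have hsupp : ∀ ρ : Measure ℝ, ρ (Icc (-2 : ℝ) 1)ᶜ = 0 → ∀ᵐ μ ∂ρ, |μ| ≤ 2 := fun ρ hρ =>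
    (ae_iff.2 hρ).mono fun μ hμ => abs_le.2 ⟨hμ.1, hμ.2.trans (by norm_num)⟩
  obtain ⟨hmom, hmom_le⟩ :=
    integrable_abs_mul_abs_mix_sub_mix_and_integral_le ν ν' (hsupp ν hν) (hsupp ν' hν')
  refine le_mul_rpow_two_thirds_of_forall_le (sqrt_nonneg _) (by norm_num) fun T δ hT hδ => ?_
  rw [sq_sqrt (integral_nonneg fun x => sq_nonneg _)]
  calc _ ≤ _ := integral_abs_le_of_integrable_sq_of_integrable_moment
        (integrable_sq_mix_sub_mix ν ν') hmom hT hδ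
    _ ≤ _ := by gcongr; linarith
end

section
/- Let r ∈ ℝ, let ν be a probability measure on ℝ supported in [r − 1/2, r + 1/2], and let f(x) = ∫ g_μ(x) dν(μ). Then for every j ∈ ℕ, the Hermite coefficient α_j = ∫_ℝ f(x) ψ_j(x − r) dx satisfies |α_j| ≤ (1/√(j!)) · (2√2)^{−j}. -/
/-!
Write `ψ_j(x) = c_j e^{x²/2} (d/dx)^j e^{-x²}` with `c_j = (2^j j! √π)^{-1/2}`. Since
`g_m(x) e^{x²/2} = (2π)^{-1/2} e^{-m²/2} e^{mx}`, integrating by parts `j` times against `e^{mx}`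
gives `∫ g_m ψ_j = c_j (-m)^j e^{-m²/4} / √2`, which is at most `(j!)^{-1/2} (2√2)^{-j}` in absolute
value when `|m| ≤ 1/2` (using `√π ≥ 1`). By Fubini, the coefficient of the mixture is the
`ν`-average of these coefficients at `m = μ - r`.
-/

open MeasureTheory Real

/-- The physicist's Hermite polynomial `h_j(x) = (−1)^j e^{x²} (d^j/dx^j) e^{−x²}`. -/
noncomputable def hermitePoly (j : ℕ) (x : ℝ) : ℝ :=
  (-1)^j * Real.exp (x^2) * iteratedDeriv j (fun t => Real.exp (-(t^2))) x

/-- The Hermite function `ψ_j`. -/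
noncomputable def psi (j : ℕ) (x : ℝ) : ℝ :=
  (-1)^j * (Real.sqrt (2^j * (Nat.factorial j : ℝ) * Real.sqrt Real.pi))⁻¹ *
    hermitePoly j x * Real.exp (-(x^2) / 2)

open Polynomial
open scoped Nat

lemma exists_iteratedDeriv_exp_eval_eq (q : ℝ[X]) (k : ℕ) :
    ∃ p : ℝ[X],
      iteratedDeriv k (fun x => exp (q.eval x)) = fun x => p.eval x * exp (q.eval x) := by
  induction k with
  | zero => exact ⟨1, by simp⟩
  | succ k ih =>
    obtain ⟨p, hp⟩ := ih
    refine ⟨derivative p + p * derivative q, funext fun x => ?_⟩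
    rw [iteratedDeriv_succ, hp]
    have h : HasDerivAt (fun x => p.eval x * exp (q.eval x)) _ x :=
      (p.hasDerivAt x).mul (q.hasDerivAt x).exp
    rw [h.deriv]
    simp only [eval_add, eval_mul]
    ring

lemma exists_iteratedDeriv_exp_neg_sq_eq (k : ℕ) :
    ∃ p : ℝ[X],
      iteratedDeriv k (fun t => exp (-(t ^ 2))) = fun x => p.eval x * exp (-(x ^ 2)) := by
  obtain ⟨p, hp⟩ := exists_iteratedDeriv_exp_eval_eq (-X ^ 2) k
  exact ⟨p, by simpa only [eval_neg, eval_pow, eval_X] using hp⟩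

lemma integrable_pow_mul_exp_neg_mul_sq_add_mul {a : ℝ} (ha : 0 < a) (n : ℕ) (b : ℝ) :
    Integrable fun x : ℝ => x ^ n * exp (-a * x ^ 2 + b * x) := by
  have hmoment : Integrable fun x : ℝ => x ^ n * exp (-(a / 2) * x ^ 2) := by
    simpa [rpow_natCast] using integrable_rpow_mul_exp_neg_mul_sq (b := a / 2) (s := n)
      (by positivity) (by linarith [n.cast_nonneg (α := ℝ)])
  refine (hmoment.norm.const_mul (exp (b ^ 2 / (2 * a)))).mono' (by fun_prop)
    (.of_forall fun x => ?_)
  have hexp : exp (-a * x ^ 2 + b * x) ≤ exp (b ^ 2 / (2 * a)) * exp (-(a / 2) * x ^ 2) := by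
    rw [← exp_add, exp_le_exp, div_add' _ _ _ (by positivity), le_div_iff₀ (by positivity)]
    nlinarith [sq_nonneg (a * x - b)]
  simp only [norm_mul, norm_pow, Real.norm_eq_abs, abs_exp]
  calc |x| ^ n * exp (-a * x ^ 2 + b * x)
      ≤ |x| ^ n * (exp (b ^ 2 / (2 * a)) * exp (-(a / 2) * x ^ 2)) := by gcongr
    _ = _ := by ring

lemma integrable_eval_mul_exp_neg_mul_sq_add_mul {a : ℝ} (ha : 0 < a) (p : ℝ[X]) (b : ℝ) :
    Integrable fun x : ℝ => p.eval x * exp (-a * x ^ 2 + b * x) := by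
  induction p using Polynomial.induction_on' with
  | add p q hp hq =>
    exact (hp.add hq).congr (.of_forall fun x => by simp only [Pi.add_apply, eval_add]; ring)
  | monomial n c =>
    refine ((integrable_pow_mul_exp_neg_mul_sq_add_mul ha n b).const_mul c).congr
      (.of_forall fun x => ?_)
    simp only [eval_monomial]
    ring

lemma integrable_exp_mul_iteratedDeriv_exp_neg_sq (b : ℝ) (k : ℕ) :
    Integrable fun x => exp (b * x) * iteratedDeriv k (fun t => exp (-(t ^ 2))) x := by
  obtain ⟨p, hp⟩ := exists_iteratedDeriv_exp_neg_sq_eq k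
  refine (integrable_eval_mul_exp_neg_mul_sq_add_mul one_pos p b).congr (.of_forall fun x => ?_)
  simp only [hp, mul_left_comm (exp (b * x)), ← exp_add]
  ring_nf

lemma hasDerivAt_iteratedDeriv_exp_neg_sq (k : ℕ) (x : ℝ) :
    HasDerivAt (iteratedDeriv k fun t => exp (-(t ^ 2)))
      (iteratedDeriv (k + 1) (fun t => exp (-(t ^ 2))) x) x := by
  obtain ⟨p, hp⟩ := exists_iteratedDeriv_exp_neg_sq_eq k
  have hdiff : DifferentiableAt ℝ (iteratedDeriv k fun t => exp (-(t ^ 2))) x := by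
    rw [hp]; fun_prop
  rw [iteratedDeriv_succ]
  exact hdiff.hasDerivAt

lemma integral_exp_mul_exp_neg_sq (b : ℝ) :
    ∫ x, exp (b * x) * exp (-(x ^ 2)) = √π * exp (b ^ 2 / 4) := by
  have h : ∀ x : ℝ,
      exp (b * x) * exp (-(x ^ 2)) = exp (b ^ 2 / 4) * exp (-1 * (x - b / 2) ^ 2) := fun x => by
    rw [← exp_add, ← exp_add]
    ring_nf
  simp only [h]
  rw [integral_const_mul, integral_sub_right_eq_self (fun x => exp (-1 * x ^ 2)),
    integral_gaussian, div_one, mul_comm]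

lemma integral_exp_mul_iteratedDeriv_exp_neg_sq (b : ℝ) (k : ℕ) :
    ∫ x, exp (b * x) * iteratedDeriv k (fun t => exp (-(t ^ 2))) x
      = (-b) ^ k * (√π * exp (b ^ 2 / 4)) := by
  induction k with
  | zero => simpa using integral_exp_mul_exp_neg_sq b
  | succ k ih =>
    have hexp : ∀ x, HasDerivAt (fun x => exp (b * x)) (b * exp (b * x)) x := fun x => by
      simpa [mul_comm] using ((hasDerivAt_id x).const_mul b).exp
    have hint := integrable_exp_mul_iteratedDeriv_exp_neg_sq b
    rw [integral_mul_deriv_eq_deriv_mul_of_integrable (fun x _ => hexp x)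
      (fun x _ => hasDerivAt_iteratedDeriv_exp_neg_sq k x) (hint (k + 1))
      (by simpa only [Pi.mul_def, mul_assoc] using (hint k).const_mul b) (hint k)]
    simp only [mul_assoc]
    rw [integral_const_mul, ih]
    ring

lemma psi_eq (j : ℕ) (x : ℝ) :
    psi j x = (√(2 ^ j * j ! * √π))⁻¹ *
      (exp (x ^ 2 / 2) * iteratedDeriv j (fun t => exp (-(t ^ 2))) x) := by
  have hsign : ((-1 : ℝ) ^ j) * (-1) ^ j = 1 := by rw [← mul_pow]; norm_num
  have hexp : exp (x ^ 2) * exp (-(x ^ 2) / 2) = exp (x ^ 2 / 2) := by rw [← exp_add]; ring_nf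
  rw [psi, hermitePoly, ← hexp]
  linear_combination (√(2 ^ j * j ! * √π))⁻¹ * exp (x ^ 2) * exp (-(x ^ 2) / 2) *
    iteratedDeriv j (fun t => exp (-(t ^ 2))) x * hsign

lemma integrable_psi (j : ℕ) : Integrable (psi j) := by
  obtain ⟨p, hp⟩ := exists_iteratedDeriv_exp_neg_sq_eq j
  refine ((integrable_eval_mul_exp_neg_mul_sq_add_mul (a := 1 / 2) (by norm_num) p 0).const_mul
    (√(2 ^ j * j ! * √π))⁻¹).congr (.of_forall fun x => ?_)
  simp only [psi_eq, hp, mul_left_comm (exp (x ^ 2 / 2)), ← exp_add]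
  ring_nf

lemma integral_gauss_mul_psi (m : ℝ) (j : ℕ) :
    ∫ x, gauss m x * psi j x
      = (√(2 ^ j * j ! * √π))⁻¹ * (-m) ^ j * exp (-(m ^ 2) / 4) / √2 := by
  have h : ∀ x, gauss m x * psi j x = ((√(2 * π))⁻¹ * (√(2 ^ j * j ! * √π))⁻¹ *
      exp (-(m ^ 2) / 2)) * (exp (m * x) * iteratedDeriv j (fun t => exp (-(t ^ 2))) x) := by
    intro x
    have hexp :
        exp (-(x - m) ^ 2 / 2) * exp (x ^ 2 / 2) = exp (-(m ^ 2) / 2) * exp (m * x) := by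
      rw [← exp_add, ← exp_add]; ring_nf
    rw [gauss, psi_eq]
    linear_combination (√(2 * π))⁻¹ * (√(2 ^ j * j ! * √π))⁻¹ *
      iteratedDeriv j (fun t => exp (-(t ^ 2))) x * hexp
  have hexp : exp (-(m ^ 2) / 2) * exp (m ^ 2 / 4) = exp (-(m ^ 2) / 4) := by
    rw [← exp_add]; ring_nf
  have hpi : √π ≠ 0 := by positivity
  simp only [h]
  rw [integral_const_mul, integral_exp_mul_iteratedDeriv_exp_neg_sq, ← hexp,
    sqrt_mul zero_le_two]
  field_simp

lemma abs_integral_gauss_mul_psi_le {m : ℝ} (hm : |m| ≤ 1 / 2) (j : ℕ) :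
    |∫ x, gauss m x * psi j x| ≤ 1 / (√(j ! : ℝ) * (2 * √2) ^ j) := by
  have hnorm : (√(2 ^ j * j ! * √π))⁻¹ ≤ (√2 ^ j * √(j ! : ℝ))⁻¹ := by
    have hpow : √2 ^ j = √((2 : ℝ) ^ j) := by
      rw [eq_comm, sqrt_eq_iff_eq_sq (by positivity) (by positivity), ← pow_mul, mul_comm,
        pow_mul, sq_sqrt zero_le_two]
    rw [hpow, ← sqrt_mul (by positivity)]
    refine inv_anti₀ (by positivity) (sqrt_le_sqrt ?_)
    exact le_mul_of_one_le_right (by positivity) (one_le_sqrt.2 (by linarith [pi_gt_three]))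
  have hexp : exp (-(m ^ 2) / 4) / √2 ≤ 1 := by
    rw [div_le_one (by positivity)]
    calc exp (-(m ^ 2) / 4) ≤ 1 := exp_le_one_iff.2 (by nlinarith [sq_nonneg m])
      _ ≤ √2 := one_le_sqrt.2 one_le_two
  rw [integral_gauss_mul_psi, mul_div_assoc, abs_mul, abs_mul, abs_of_pos (by positivity),
    abs_of_pos (by positivity : 0 < exp (-(m ^ 2) / 4) / √2), abs_pow, abs_neg]
  calc (√(2 ^ j * j ! * √π))⁻¹ * |m| ^ j * (exp (-(m ^ 2) / 4) / √2)
      ≤ (√2 ^ j * √(j ! : ℝ))⁻¹ * (1 / 2) ^ j * 1 := by gcongr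
    _ = 1 / (√(j ! : ℝ) * (2 * √2) ^ j) := by
      field_simp
      rw [← mul_pow]
      ring

lemma gauss_sub_sub (μ x r : ℝ) : gauss (μ - r) (x - r) = gauss μ x := by
  simp only [gauss, sub_sub_sub_cancel_right]

lemma integral_gauss_mul_psi_sub (μ r : ℝ) (j : ℕ) :
    ∫ x, gauss μ x * psi j (x - r) = ∫ x, gauss (μ - r) x * psi j x := by
  simp only [← gauss_sub_sub μ _ r]
  exact integral_sub_right_eq_self (fun x => gauss (μ - r) x * psi j x) r

lemma continuous_gauss : Continuous fun p : ℝ × ℝ => gauss p.1 p.2 := by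
  unfold gauss; fun_prop

lemma abs_gauss_le (μ x : ℝ) : |gauss μ x| ≤ (√(2 * π))⁻¹ := by
  rw [gauss, abs_of_nonneg (by positivity)]
  exact mul_le_of_le_one_right (by positivity)
    (exp_le_one_iff.2 (by nlinarith [sq_nonneg (x - μ)]))

lemma integral_mix_mul (ν : Measure ℝ) [IsFiniteMeasure ν] {f : ℝ → ℝ} (hf : Integrable f) :
    ∫ x, mix ν x * f x = ∫ μ, (∫ x, gauss μ x * f x) ∂ν := by
  have hprod : Integrable (Function.uncurry fun μ x => gauss μ x * f x) (ν.prod volume) := by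
    refine ((hf.norm.const_mul (√(2 * π))⁻¹).comp_snd ν).mono'
      (continuous_gauss.aestronglyMeasurable.mul hf.1.comp_snd) (.of_forall fun p => ?_)
    rw [Function.uncurry_apply_pair, norm_mul, Real.norm_eq_abs]
    exact mul_le_mul_of_nonneg_right (abs_gauss_le _ _) (norm_nonneg _)
  simp only [mix, ← integral_mul_const]
  exact (integral_integral_swap hprod).symm

theorem stmt8 (r : ℝ) (ν : Measure ℝ) [IsProbabilityMeasure ν]
    (hsupp : ν (Set.Icc (r - 1/2) (r + 1/2))ᶜ = 0) (j : ℕ) :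
    |∫ x, mix ν x * psi j (x - r)|
      ≤ 1 / (Real.sqrt (Nat.factorial j : ℝ) * (2 * Real.sqrt 2)^j) := by
  have hcoeff : ∀ᵐ μ ∂ν, ‖∫ x, gauss μ x * psi j (x - r)‖
      ≤ 1 / (√(j ! : ℝ) * (2 * √2) ^ j) := by
    filter_upwards [mem_ae_iff.2 hsupp] with μ hμ
    rw [norm_eq_abs, integral_gauss_mul_psi_sub]
    exact abs_integral_gauss_mul_psi_le (abs_le.2 ⟨by linarith [hμ.1], by linarith [hμ.2]⟩) j
  rw [integral_mix_mul ν ((integrable_psi j).comp_sub_right r)]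
  simpa using norm_integral_le_of_norm_le_const hcoeff
end

section
/- Let ℓ ≥ 1 and j be nonnegative integers, and let a₀ < a₁ < … < a_{ℓ−1} be nonnegative integers with a_c ≠ j for every c. Then ∏_{c=0}^{ℓ−1} |a_c / (a_c − j)| ≤ 2^j · 4^ℓ. -/
private lemma choose_sq_le (n : ℕ) : ∀ m : ℕ, (n.choose m)^2 ≤ 2^(n + 3*m) := by
  induction n with
  | zero =>
    intro m
    cases m with
    | zero => simp
    | succ m => simp [Nat.choose]
  | succ n ih =>
    intro m
    cases m with
    | zero => simpa using Nat.one_le_two_pow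
    | succ m =>
      have h1 := ih (m + 1)
      have h2 := ih m
      have e1 : n + 3 * (m + 1) = n + 3 * m + 3 := by ring
      have e2 : n + 1 + 3 * (m + 1) = n + 3 * m + 4 := by ring
      rw [e1] at h1
      rw [Nat.choose_succ_succ, e2]
      zify at h1 h2 ⊢
      have p3 : (2:ℤ)^(n+3*m+3) = 8 * 2^(n+3*m) := by rw [pow_add]; ring
      have p4 : (2:ℤ)^(n+3*m+4) = 16 * 2^(n+3*m) := by rw [pow_add]; ring
      rw [p3] at h1
      rw [p4]
      nlinarith [sq_nonneg (3 * (n.choose m : ℤ) - n.choose (m+1)),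
        pow_nonneg (by norm_num : (0:ℤ) ≤ 2) (n + 3*m)]

private lemma prod_ratio_le (j : ℕ) : ∀ (s : Finset ℕ), (∀ x ∈ s, 1 ≤ x) →
    ∏ x ∈ s, ((j : ℝ) + x) / x ≤ (j + s.card).choose s.card := by
  intro s
  induction s using Finset.strongInduction with
  | _ s ih =>
    intro hs
    rcases s.eq_empty_or_nonempty with rfl | hne
    · simp
    obtain ⟨k, hk⟩ : ∃ k, s.card = k + 1 :=
      ⟨s.card - 1, (Nat.succ_pred_eq_of_pos (Finset.card_pos.mpr hne)).symm⟩
    set m := s.max' hne with hm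
    have hmem : m ∈ s := s.max'_mem hne
    have hsub : s ⊆ Finset.Icc 1 m := fun x hx => Finset.mem_Icc.mpr ⟨hs x hx, s.le_max' x hx⟩
    have hcard_le : s.card ≤ m := by
      have := Finset.card_le_card hsub
      simpa using this
    have herase : (s.erase m).card = k := by
      rw [Finset.card_erase_of_mem hmem, hk]; rfl
    have hrec := ih (s.erase m) (Finset.erase_ssubset hmem)
      (fun x hx => hs x (Finset.mem_of_mem_erase hx))
    rw [herase] at hrec
    rw [← Finset.mul_prod_erase s _ hmem]
    have hcpos : (0:ℝ) < s.card := by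
      have : 0 < s.card := Finset.card_pos.mpr hne
      exact_mod_cast this
    have hmpos : (0:ℝ) < m := by
      have := hs m hmem; positivity
    have hcm : (s.card : ℝ) ≤ m := by exact_mod_cast hcard_le
    have hF : ((j:ℝ) + m)/m ≤ ((j:ℝ) + s.card)/s.card := by
      rw [div_le_div_iff₀ hmpos hcpos]
      have hj : (0:ℝ) ≤ j := Nat.cast_nonneg j
      nlinarith
    have hprod_nonneg : 0 ≤ ∏ x ∈ s.erase m, ((j:ℝ)+x)/x :=
      Finset.prod_nonneg fun x _ => by positivity
    have step : ((j:ℝ)+m)/m * ∏ x ∈ s.erase m, ((j:ℝ)+x)/x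
        ≤ ((j:ℝ)+s.card)/s.card * ((j+k).choose k) :=
      mul_le_mul hF hrec hprod_nonneg (by positivity)
    refine le_trans step ?_
    rw [hk]
    have hch : (j + (k+1)) * (j + k).choose k = (j + (k+1)).choose (k+1) * (k+1) := by
      have := Nat.add_one_mul_choose_eq (j + k) k
      simpa [Nat.succ_eq_add_one, Nat.add_assoc, mul_comm] using this
    rw [div_mul_eq_mul_div, div_le_iff₀ (by positivity)]
    push_cast
    have := congrArg (fun x : ℕ => (x : ℝ)) hch
    push_cast at this
    linarith [this.le]

theorem stmt10 (ℓ j : ℕ) (hℓ : 1 ≤ ℓ) (a : Fin ℓ → ℕ) (ha : StrictMono a)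
    (hne : ∀ c, a c ≠ j) :
    (∏ c, |(a c : ℝ) / ((a c : ℝ) - (j : ℝ))|) ≤ 2^j * 4^ℓ := by
  classical
  set f : Fin ℓ → ℝ := fun c => |(a c : ℝ) / ((a c : ℝ) - (j : ℝ))| with hf
  set P : Finset (Fin ℓ) := Finset.univ.filter (fun c => j < a c) with hP
  set M : Finset (Fin ℓ) := Finset.univ.filter (fun c => ¬ j < a c) with hM
  have hsplit : (∏ c, f c) = (∏ c ∈ P, f c) * (∏ c ∈ M, f c) :=
    (Finset.prod_filter_mul_prod_filter_not _ _ _).symm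
  have hPd : ∀ c ∈ P, j < a c := fun c hc => (Finset.mem_filter.mp hc).2
  have hMd : ∀ c ∈ M, a c < j := by
    intro c hc
    have h1 : ¬ j < a c := (Finset.mem_filter.mp hc).2
    exact lt_of_le_of_ne (le_of_not_gt h1) (hne c)
  -- the plus side
  have hplus : (∏ c ∈ P, f c) ≤ ((j + P.card).choose P.card : ℝ) := by
    have hEq : ∀ c ∈ P, f c = ((j:ℝ) + ((a c - j : ℕ) : ℝ)) / ((a c - j : ℕ) : ℝ) := by
      intro c hc
      have h := hPd c hc
      have hcast : ((a c - j : ℕ) : ℝ) = (a c : ℝ) - j := by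
        push_cast [Nat.cast_sub h.le]; ring
      have hpos : (0:ℝ) < (a c : ℝ) - j := by
        have : (j:ℝ) < a c := by exact_mod_cast h
        linarith
      show |(a c : ℝ) / ((a c : ℝ) - (j : ℝ))| = _
      rw [abs_of_nonneg (by positivity), hcast]
      congr 1
      ring
    rw [Finset.prod_congr rfl hEq]
    have hinj : ∀ x ∈ P, ∀ y ∈ P, a x - j = a y - j → x = y := by
      intro x hx y hy hxy
      have hx' := hPd x hx; have hy' := hPd y hy
      have : a x = a y := by omega
      exact ha.injective this
    rw [← Finset.prod_image (s := P) (g := fun c => a c - j) (f := fun x : ℕ => ((j:ℝ) + x) / x) hinj]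
    have hcard : (P.image (fun c => a c - j)).card = P.card :=
      Finset.card_image_of_injOn hinj
    have h := prod_ratio_le j (P.image (fun c => a c - j)) (by
      intro x hx
      obtain ⟨c, hc, rfl⟩ := Finset.mem_image.mp hx
      have := hPd c hc; omega)
    rw [hcard] at h
    exact h
  -- the minus side
  have hminus : (∏ c ∈ M, f c) ≤ ((j + M.card).choose M.card : ℝ) := by
    have hle : ∀ c ∈ M, f c ≤ ((j:ℝ) + ((j - a c : ℕ) : ℝ)) / ((j - a c : ℕ) : ℝ) := by
      intro c hc
      have h := hMd c hc
      have hcast : ((j - a c : ℕ) : ℝ) = (j : ℝ) - a c := by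
        push_cast [Nat.cast_sub h.le]; ring
      have hpos : (0:ℝ) < (j : ℝ) - a c := by
        have : (a c : ℝ) < j := by exact_mod_cast h
        linarith
      have habs : f c = (a c : ℝ) / ((j:ℝ) - a c) := by
        show |(a c : ℝ) / ((a c : ℝ) - (j : ℝ))| = _
        rw [abs_div, abs_of_nonneg (Nat.cast_nonneg _), abs_sub_comm,
          abs_of_pos hpos]
      rw [habs, hcast]
      rw [div_le_div_iff_of_pos_right hpos]
      linarith
    calc (∏ c ∈ M, f c) ≤ ∏ c ∈ M, ((j:ℝ) + ((j - a c : ℕ) : ℝ)) / ((j - a c : ℕ) : ℝ) := by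
          apply Finset.prod_le_prod (fun c _ => abs_nonneg _) hle
      _ ≤ ((j + M.card).choose M.card : ℝ) := by
          have hinj : ∀ x ∈ M, ∀ y ∈ M, j - a x = j - a y → x = y := by
            intro x hx y hy hxy
            have hx' := hMd x hx; have hy' := hMd y hy
            have : a x = a y := by omega
            exact ha.injective this
          rw [← Finset.prod_image (s := M) (g := fun c => j - a c) (f := fun x : ℕ => ((j:ℝ) + x) / x) hinj]
          have hcard : (M.image (fun c => j - a c)).card = M.card :=
            Finset.card_image_of_injOn hinj
          have h := prod_ratio_le j (M.image (fun c => j - a c)) (by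
            intro x hx
            obtain ⟨c, hc, rfl⟩ := Finset.mem_image.mp hx
            have := hMd c hc; omega)
          rw [hcard] at h
          exact h
  -- combine
  have hpm : P.card + M.card = ℓ := by
    rw [hP, hM]
    rw [Finset.card_filter_add_card_filter_not]
    simp
  have hfinal : (j + P.card).choose P.card * (j + M.card).choose M.card ≤ 2^j * 4^ℓ := by
    set p := P.card; set m := M.card
    have h1 := choose_sq_le (j + p) p
    have h2 := choose_sq_le (j + m) m
    have hsq : ((j+p).choose p * (j+m).choose m)^2 ≤ (2^j * 4^ℓ)^2 := by
      calc ((j+p).choose p * (j+m).choose m)^2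
          = (j+p).choose p ^ 2 * (j+m).choose m ^ 2 := by ring
        _ ≤ 2^(j+p+3*p) * 2^(j+m+3*m) := Nat.mul_le_mul h1 h2
        _ = (2^j * 4^ℓ)^2 := by
            rw [← hpm, show (4:ℕ) = 2^2 from rfl, ← pow_add, ← pow_mul, ← pow_add, ← pow_mul]
            ring_nf
    exact (Nat.pow_le_pow_iff_left (by norm_num : 2 ≠ 0)).mp hsq
  rw [hsplit]
  calc (∏ c ∈ P, f c) * (∏ c ∈ M, f c)
      ≤ ((j + P.card).choose P.card : ℝ) * ((j + M.card).choose M.card : ℝ) := by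
        apply mul_le_mul hplus hminus (Finset.prod_nonneg fun c _ => abs_nonneg _)
          (Nat.cast_nonneg _)
    _ ≤ ((2^j * 4^ℓ : ℕ) : ℝ) := by exact_mod_cast hfinal
    _ = 2^j * 4^ℓ := by push_cast; ring
end

section
/- Let m ≥ 1 and i ≥ 1 be integers, and let I_i = {(k₁, …, k_i) ∈ ℕ^i : k₁ + k₂ + … + k_i ≤ m − 1}. Then: (a) for every real y, (Σ_{(k₁,…,k_i) ∈ I_i} y^{Σ_{j=1}^{i} j·k_j}) · ∏_{j=1}^{i} (1 − y^j) = ∏_{j=1}^{i} (1 − y^{m−1+j}); and (b) for every y ∈ (0,1), defining T_i = ∏_{j=1}^{i} (1 − y^{m−1+j})²/(1 − y^j), S₀ = 1 − y^{m²}, and S_i = S_{i−1} − y^{m²+i}·T_i for i ≥ 1, one has S_{i−1} = ∏_{j=1}^{i} (1 − y^{m−1+j}) · Σ_{(k₁,…,k_i) ∈ I_i} y^{Σ_{j=1}^{i} (m−1+j)·k_j}. -/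
/-!
Write `F_x(i, n) = ∑ x ^ (∑ k) * y ^ (∑ (j + 1) k_j)` over tuples `k ∈ ℕ^i` with `∑ k ≤ n`.
Splitting off the last coordinate gives `F(i+1, n+1) = F(i, n+1) + x y^(i+1) F(i+1, n)`, and from
this recursion one derives
`(1 - x y^(i+1)) F_x(i+1, n) = F_x(i, n) - x^(n+1) y^(n+1+i) F_1(i, n)`.
At `x = 1` this is the recursion of the Gaussian binomial `F_1(i, n) = [n+i choose i]_y`, which
gives (a). At `x = y^(m-1)`, `n = m - 1` the correction term is `y^(m²+i) F_1(i, m-1)`, and by (a)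
`T_i = ∏_{j<i} (1 - y^(m+j)) · F_1(i, m-1)`, so the identity is exactly the recursion of `S`,
giving (b).
-/

open Finset

variable {R : Type*} [CommRing R]

/-- The sum `F_x(i, n)` of the header: the generating function of partitions into at most `n` parts
of size at most `i`, with `x` counting the parts. -/
def boxPartitionGF (x y : R) : ℕ → ℕ → R
  | 0, _ => 1
  | i + 1, n => ∑ p ∈ antidiagonal n, (x * y ^ (i + 1)) ^ p.1 * boxPartitionGF x y i p.2

namespace boxPartitionGF

variable (x y : R)

@[simp] theorem zero_left (n : ℕ) : boxPartitionGF x y 0 n = 1 := rfl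

@[simp] theorem zero_right (i : ℕ) : boxPartitionGF x y i 0 = 1 := by
  induction i with
  | zero => rfl
  | succ i ih => simp [boxPartitionGF, ih]

theorem succ_succ (i n : ℕ) :
    boxPartitionGF x y (i + 1) (n + 1)
      = boxPartitionGF x y i (n + 1) + x * y ^ (i + 1) * boxPartitionGF x y (i + 1) n := by
  simp only [boxPartitionGF, Nat.sum_antidiagonal_succ, pow_zero, one_mul, mul_sum, pow_succ']
  simp only [mul_assoc]

theorem sum_filter_eq {m n : ℕ} (hnm : n < m) (i : ℕ) :
    ∑ k ∈ univ.filter (fun k : Fin i → Fin m => ∑ j, (k j : ℕ) ≤ n),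
      x ^ (∑ j, (k j : ℕ)) * y ^ (∑ j : Fin i, ((j : ℕ) + 1) * (k j : ℕ))
      = boxPartitionGF x y i n := by
  induction i generalizing n with
  | zero => simp
  | succ i ih =>
    have sum_last_eq : ∀ t : ℕ, (∑ p : Fin i → Fin m, if ∑ j, (p j : ℕ) + t ≤ n then
        x ^ (∑ j, (p j : ℕ) + t) * y ^ (∑ j : Fin i, ((j : ℕ) + 1) * p j + (i + 1) * t) else 0)
        = if t ≤ n then (x * y ^ (i + 1)) ^ t * boxPartitionGF x y i (n - t) else 0 := by
      intro t
      split_ifs with ht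
      · rw [← ih (n := n - t) (by omega), sum_filter, mul_sum]
        refine sum_congr rfl fun p _ => ?_
        rw [mul_ite, mul_zero]
        congr 1
        · exact propext (by omega)
        · ring
      · exact sum_eq_zero fun p _ => if_neg (by omega)
    rw [sum_filter, ← (Fin.snocEquiv fun _ => Fin m).sum_comp, Fintype.sum_prod_type]
    simp only [Fin.snocEquiv_apply, Fin.sum_univ_castSucc, Fin.snoc_castSucc, Fin.snoc_last,
      Fin.val_castSucc, Fin.val_last, sum_last_eq]
    rw [Fin.sum_univ_eq_sum_range
        (fun t => if t ≤ n then (x * y ^ (i + 1)) ^ t * boxPartitionGF x y i (n - t) else 0),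
      ← sum_filter,
      show (range m).filter (· ≤ n) = range (n + 1) by ext; simp; omega,
      boxPartitionGF, Nat.sum_antidiagonal_eq_sum_range_succ_mk]

/-- Both sides collect the tuples with exactly `n + 1` parts. -/
theorem succ_sub (i n : ℕ) :
    boxPartitionGF x y i (n + 1) - boxPartitionGF x y i n
      = x ^ (n + 1) * (boxPartitionGF 1 y i (n + 1) - boxPartitionGF 1 y i n) := by
  induction i generalizing n with
  | zero => simp
  | succ i ih =>
    induction n with
    | zero =>
      simp only [succ_succ, zero_right, mul_one]
      linear_combination ih 0 + zero_right x y i - x * zero_right 1 y i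
    | succ n ihn =>
      linear_combination ih (n + 1) + x * y ^ (i + 1) * ihn + succ_succ x y i (n + 1)
        - succ_succ x y i n - x ^ (n + 2) * (succ_succ 1 y i (n + 1) - succ_succ 1 y i n)

theorem one_sub_pow_mul_one_succ_left (i n : ℕ) :
    (1 - y ^ (i + 1)) * boxPartitionGF 1 y (i + 1) n
      = (1 - y ^ (n + 1)) * boxPartitionGF 1 y i (n + 1) := by
  induction i generalizing n with
  | zero =>
    induction n with
    | zero => simp
    | succ n ihn =>
      rw [succ_succ]
      simp only [zero_left, zero_add, mul_one] at ihn ⊢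
      linear_combination y * ihn
  | succ i ih =>
    induction n with
    | zero =>
      have h := ih 0
      rw [succ_succ]
      simp only [zero_right, mul_one] at h ⊢
      linear_combination h
    | succ n ihn =>
      linear_combination y ^ (i + 2) * ihn + ih (n + 1) + (1 - y ^ (i + 2)) *
        succ_succ 1 y (i + 1) n - (1 - y ^ (n + 2)) * succ_succ 1 y i (n + 1)

theorem one_sub_pow_mul_one_succ_right (i n : ℕ) :
    (1 - y ^ (n + 1)) * boxPartitionGF 1 y i (n + 1)
      = (1 - y ^ (n + 1 + i)) * boxPartitionGF 1 y i n := by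
  cases i with
  | zero => simp
  | succ i =>
    linear_combination (1 - y ^ (n + 1)) * succ_succ 1 y i n - one_sub_pow_mul_one_succ_left y i n

theorem one_sub_mul_pow_mul_succ_left (i n : ℕ) :
    (1 - x * y ^ (i + 1)) * boxPartitionGF x y (i + 1) n
      = boxPartitionGF x y i n - x ^ (n + 1) * y ^ (n + 1 + i) * boxPartitionGF 1 y i n := by
  induction n with
  | zero =>
    simp only [zero_right]
    ring
  | succ n ihn =>
    linear_combination x * y ^ (i + 1) * ihn + (1 - x * y ^ (i + 1)) * succ_succ x y i n
      - x * y ^ (i + 1) * succ_sub x y i n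
      - x ^ (n + 2) * y ^ (i + 1) * one_sub_pow_mul_one_succ_right y i n

theorem one_mul_prod_one_sub_pow (i n : ℕ) :
    boxPartitionGF 1 y i n * ∏ j ∈ range i, (1 - y ^ (j + 1))
      = ∏ j ∈ range i, (1 - y ^ (n + 1 + j)) := by
  induction i with
  | zero => simp
  | succ i ih =>
    rw [prod_range_succ, prod_range_succ, ← ih]
    linear_combination (∏ j ∈ range i, (1 - y ^ (j + 1))) *
      one_sub_mul_pow_mul_succ_left 1 y i n

end boxPartitionGF

open boxPartitionGF

theorem prod_sq_div_eq_prod_mul_boxPartitionGF {K : Type*} [Field K] {y : K}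
    (hy : ∀ j, 1 - y ^ (j + 1) ≠ 0) (i n : ℕ) :
    ∏ j ∈ range i, (1 - y ^ (n + 1 + j)) ^ 2 / (1 - y ^ (j + 1))
      = (∏ j ∈ range i, (1 - y ^ (n + 1 + j))) * boxPartitionGF 1 y i n := by
  have hden : ∏ j ∈ range i, (1 - y ^ (j + 1)) ≠ 0 := prod_ne_zero_iff.mpr fun j _ => hy j
  rw [prod_div_distrib, prod_pow, div_eq_iff hden, mul_assoc, one_mul_prod_one_sub_pow, sq]

theorem eq_prod_mul_boxPartitionGF_of_recursion {K : Type*} [Field K] {y : K}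
    (hy : ∀ j, 1 - y ^ (j + 1) ≠ 0) (c : ℕ) (S : ℕ → K) (hS0 : S 0 = 1 - y ^ ((c + 1) ^ 2))
    (hS : ∀ i, 1 ≤ i → S i = S (i - 1) - y ^ ((c + 1) ^ 2 + i) *
      ∏ j ∈ range i, (1 - y ^ (c + 1 + j)) ^ 2 / (1 - y ^ (j + 1))) (e : ℕ) :
    S e = (∏ j ∈ range (e + 1), (1 - y ^ (c + 1 + j))) * boxPartitionGF (y ^ c) y (e + 1) c := by
  induction e with
  | zero =>
    rw [hS0, prod_range_one]
    have h := one_sub_mul_pow_mul_succ_left (y ^ c) y 0 c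
    rw [zero_left, zero_left] at h
    linear_combination -h
  | succ e ih =>
    rw [hS (e + 1) (by omega), Nat.add_sub_cancel, ih, prod_sq_div_eq_prod_mul_boxPartitionGF hy,
      prod_range_succ _ (e + 1)]
    linear_combination (-∏ j ∈ range (e + 1), (1 - y ^ (c + 1 + j))) *
      one_sub_mul_pow_mul_succ_left (y ^ c) y (e + 1) c

theorem stmt15 (m i : ℕ) (hm : 1 ≤ m) (hi : 1 ≤ i) :
    (∀ y : ℝ,
      (∑ k ∈ Finset.univ.filter (fun k : Fin i → Fin m => ∑ j, (k j : ℕ) ≤ m - 1),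
          y ^ (∑ j : Fin i, ((j : ℕ) + 1) * (k j : ℕ))) *
        ∏ j ∈ Finset.range i, (1 - y^(j+1))
      = ∏ j ∈ Finset.range i, (1 - y^(m+j))) ∧
    (∀ y : ℝ, 0 < y → y < 1 → ∀ S : ℕ → ℝ,
      S 0 = 1 - y^(m^2) →
      (∀ i' : ℕ, 1 ≤ i' →
        S i' = S (i'-1) - y^(m^2+i') *
          ∏ j ∈ Finset.range i', (1 - y^(m+j))^2 / (1 - y^(j+1))) →
      S (i-1) = (∏ j ∈ Finset.range i, (1 - y^(m+j))) *
        ∑ k ∈ Finset.univ.filter (fun k : Fin i → Fin m => ∑ j, (k j : ℕ) ≤ m - 1),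
          y ^ (∑ j : Fin i, (m + (j : ℕ)) * (k j : ℕ))) := by
  obtain ⟨c, rfl⟩ : ∃ c, m = c + 1 := ⟨m - 1, by omega⟩
  obtain ⟨e, rfl⟩ : ∃ e, i = e + 1 := ⟨i - 1, by omega⟩
  simp only [Nat.add_sub_cancel]
  refine ⟨fun y => ?_, fun y hy0 hy1 S hS0 hS => ?_⟩
  · have h := sum_filter_eq (1 : ℝ) y (Nat.lt_succ_self c) (e + 1)
    simp only [one_pow, one_mul] at h
    rw [h, one_mul_prod_one_sub_pow]
  · have hy : ∀ j, 1 - y ^ (j + 1) ≠ 0 := fun j =>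
      (sub_pos.mpr (pow_lt_one₀ hy0.le hy1 j.succ_ne_zero)).ne'
    have hweight : ∀ k : Fin (e + 1) → Fin (c + 1),
        y ^ (∑ j : Fin (e + 1), (c + 1 + (j : ℕ)) * (k j : ℕ))
          = (y ^ c) ^ (∑ j, (k j : ℕ)) * y ^ (∑ j : Fin (e + 1), ((j : ℕ) + 1) * (k j : ℕ)) := by
      intro k
      rw [← pow_mul, ← pow_add, mul_sum, ← sum_add_distrib]
      congr 1
      exact sum_congr rfl fun j _ => by ring
    simp only [hweight, sum_filter_eq (y ^ c) y (Nat.lt_succ_self c)]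
    exact eq_prod_mul_boxPartitionGF_of_recursion hy c S hS0 hS e
end
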